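/- arXiv:2404.05353 — 4 statements merged into one kernel-verified Lean document; each statement's English description precedes it below -/
import Mathlib

section
/- Let G₁ = ⟨A, M, S, Σ⟩, G₂ = ⟨Q, S, E, T, Σ⟩ and G₁₂ = ⟨Q, S, T, Σ⟩ as subgroups of Sym(Ω). Then the index of G₁₂ in G₁ is q+1 and the index of G₁₂ in G₂ is q. -/
open Equiv

/-! Context: `q = 3^r`, `K = F_q` a finite field with `3^r` elements, `Ω = K × K × K`,
`ε = 3^(r-1)` (so `q = 3ε`).  Permutations of `Ω` are composed left to right in the paper;
in Lean, `(g * h) x = g (h x)`, so the paper's product `g·h` corresponds to `h * g` here,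
and the paper's conjugate `g⁻¹ x g` corresponds to `g * x * g⁻¹`. -/

/-- The permutation `α_{(u,v,w)} : (a,b,c) ↦ (a+u, b+v, c+w)` of `Ω = K × K × K`. -/
def alphaPerm {K : Type*} [Field K] (u v w : K) : Equiv.Perm (K × K × K) where
  toFun x := (x.1 + u, x.2.1 + v, x.2.2 + w)
  invFun x := (x.1 - u, x.2.1 - v, x.2.2 - w)
  left_inv x := by simp
  right_inv x := by simp

/-- The permutation `β_{λ,μ} : (a,b,c) ↦ (λa, μb, (λμ)^{2ε} c)` of `Ω = K × K × K`. -/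
def betaPerm {K : Type*} [Field K] (ε : ℕ) (l m : Kˣ) : Equiv.Perm (K × K × K) where
  toFun x := ((l : K) * x.1, (m : K) * x.2.1, (((l * m) ^ (2 * ε) : Kˣ) : K) * x.2.2)
  invFun x := ((l⁻¹ : Kˣ) * x.1, (m⁻¹ : Kˣ) * x.2.1, ((((l * m) ^ (2 * ε))⁻¹ : Kˣ) : K) * x.2.2)
  left_inv x := by simp
  right_inv x := by simp

/-- The permutation `γ_e : (a,b,c) ↦ (a+eb, b, c)` of `Ω = K × K × K`. -/
def gammaPerm {K : Type*} [Field K] (e : K) : Equiv.Perm (K × K × K) where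
  toFun x := (x.1 + e * x.2.1, x.2.1, x.2.2)
  invFun x := (x.1 - e * x.2.1, x.2.1, x.2.2)
  left_inv x := by simp
  right_inv x := by simp

/-- The permutation `δ : (a,b,c) ↦ (b, -a, c)` of `Ω = K × K × K`. -/
def deltaPerm (K : Type*) [Field K] : Equiv.Perm (K × K × K) where
  toFun x := (x.2.1, -x.1, x.2.2)
  invFun x := (-x.2.1, x.1, x.2.2)
  left_inv x := by simp
  right_inv x := by simp

/-- The permutation `τ_d : (a,b,c) ↦ (a + d·b² + d^ε·c, b, c)` of `Ω = K × K × K`. -/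
def tauPerm {K : Type*} [Field K] (ε : ℕ) (d : K) : Equiv.Perm (K × K × K) where
  toFun x := (x.1 + d * x.2.1 ^ 2 + d ^ ε * x.2.2, x.2.1, x.2.2)
  invFun x := (x.1 - d * x.2.1 ^ 2 - d ^ ε * x.2.2, x.2.1, x.2.2)
  left_inv x := by obtain ⟨a, b, c⟩ := x; simp; ring
  right_inv x := by obtain ⟨a, b, c⟩ := x; simp; ring

/-- The cube map `x ↦ x³` as a permutation of a finite field of characteristic 3. -/
noncomputable def frobPerm (K : Type*) [Field K] [Fintype K] [CharP K 3] : Equiv.Perm K :=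
  Equiv.ofBijective (fun x => x ^ 3)
    (Finite.injective_iff_bijective.mp (by
      intro x y h
      exact frobenius_inj K 3 (by simpa [frobenius_def] using h)))

/-- The permutation `σ : (a,b,c) ↦ (a³, b³, c³)` of `Ω = K × K × K`. -/
noncomputable def sigmaPerm (K : Type*) [Field K] [Fintype K] [CharP K 3] :
    Equiv.Perm (K × K × K) :=
  (frobPerm K).prodCongr ((frobPerm K).prodCongr (frobPerm K))

variable (K : Type*) [Field K]

/-- `A = ⟨α_{(u,v,w)} : u,v,w ∈ F_q⟩`. -/
def Agrp : Subgroup (Equiv.Perm (K × K × K)) :=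
  Subgroup.closure {g | ∃ u v w : K, g = alphaPerm u v w}

/-- `V = ⟨α_{(u,v,0)} : u,v ∈ F_q⟩`. -/
def Vgrp : Subgroup (Equiv.Perm (K × K × K)) :=
  Subgroup.closure {g | ∃ u v : K, g = alphaPerm u v 0}

/-- `F = ⟨α_{(0,0,w)} : w ∈ F_q⟩`. -/
def Fgrp : Subgroup (Equiv.Perm (K × K × K)) :=
  Subgroup.closure {g | ∃ w : K, g = alphaPerm 0 0 w}

/-- `Z₀ = ⟨α_{(u,0,w)} : u,w ∈ F_q⟩`. -/
def Z0grp : Subgroup (Equiv.Perm (K × K × K)) :=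
  Subgroup.closure {g | ∃ u w : K, g = alphaPerm u 0 w}

/-- `Z = ⟨α_{(u,0,0)} : u ∈ F_q⟩`. -/
def Zgrp : Subgroup (Equiv.Perm (K × K × K)) :=
  Subgroup.closure {g | ∃ u : K, g = alphaPerm u 0 0}

/-- `C = ⟨γ_e : e ∈ F_q⟩`. -/
def Cgrp : Subgroup (Equiv.Perm (K × K × K)) :=
  Subgroup.closure {g | ∃ e : K, g = gammaPerm e}

/-- `R = ⟨β_{μ,μ} : μ ∈ F_q^×⟩`. -/
def Rgrp (ε : ℕ) : Subgroup (Equiv.Perm (K × K × K)) :=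
  Subgroup.closure {g | ∃ μ : Kˣ, g = betaPerm ε μ μ}

/-- `S = ⟨β_{μ²,μ} : μ ∈ F_q^×⟩`. -/
def Sgrp (ε : ℕ) : Subgroup (Equiv.Perm (K × K × K)) :=
  Subgroup.closure {g | ∃ μ : Kˣ, g = betaPerm ε (μ ^ 2) μ}

/-- `T = ⟨β_{μ,μ⁻¹} : μ ∈ F_q^×⟩`. -/
def Tgrp (ε : ℕ) : Subgroup (Equiv.Perm (K × K × K)) :=
  Subgroup.closure {g | ∃ μ : Kˣ, g = betaPerm ε μ μ⁻¹}

/-- `D = ⟨δ⟩`. -/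
def Dgrp : Subgroup (Equiv.Perm (K × K × K)) :=
  Subgroup.closure {deltaPerm K}

/-- `E = ⟨τ_d : d ∈ F_q⟩`. -/
def Egrp (ε : ℕ) : Subgroup (Equiv.Perm (K × K × K)) :=
  Subgroup.closure {g | ∃ d : K, g = tauPerm ε d}

/-- `M = ⟨C, D, T⟩`. -/
def Mgrp (ε : ℕ) : Subgroup (Equiv.Perm (K × K × K)) :=
  Cgrp K ⊔ Dgrp K ⊔ Tgrp K ε

/-- `Q = ⟨A, C⟩`. -/
def QgrpBig : Subgroup (Equiv.Perm (K × K × K)) :=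
  Agrp K ⊔ Cgrp K

/-- `P = ⟨Q, E⟩`. -/
def Pgrp (ε : ℕ) : Subgroup (Equiv.Perm (K × K × K)) :=
  QgrpBig K ⊔ Egrp K ε

/-- `Σ = ⟨σ⟩`. -/
noncomputable def Siggrp (K : Type*) [Field K] [Fintype K] [CharP K 3] :
    Subgroup (Equiv.Perm (K × K × K)) :=
  Subgroup.closure {sigmaPerm K}

/-- `G₁ = ⟨A, M, S, Σ⟩`. -/
noncomputable def G1grp (K : Type*) [Field K] [Fintype K] [CharP K 3] (ε : ℕ) :
    Subgroup (Equiv.Perm (K × K × K)) :=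
  Agrp K ⊔ Mgrp K ε ⊔ Sgrp K ε ⊔ Siggrp K

/-- `G₂ = ⟨Q, S, E, T, Σ⟩`. -/
noncomputable def G2grp (K : Type*) [Field K] [Fintype K] [CharP K 3] (ε : ℕ) :
    Subgroup (Equiv.Perm (K × K × K)) :=
  QgrpBig K ⊔ Sgrp K ε ⊔ Egrp K ε ⊔ Tgrp K ε ⊔ Siggrp K

/-- `G₁₂ = ⟨Q, S, T, Σ⟩`. -/
noncomputable def G12grp (K : Type*) [Field K] [Fintype K] [CharP K 3] (ε : ℕ) :
    Subgroup (Equiv.Perm (K × K × K)) :=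
  QgrpBig K ⊔ Sgrp K ε ⊔ Tgrp K ε ⊔ Siggrp K

section Identities
variable {K : Type*} [Field K]

@[simp] lemma alpha_apply (u v w : K) (x : K × K × K) :
    alphaPerm u v w x = (x.1 + u, x.2.1 + v, x.2.2 + w) := rfl

@[simp] lemma beta_apply (ε : ℕ) (l m : Kˣ) (x : K × K × K) :
    betaPerm ε l m x = ((l : K) * x.1, (m : K) * x.2.1, (((l * m) ^ (2 * ε) : Kˣ) : K) * x.2.2) := rfl

@[simp] lemma gamma_apply (e : K) (x : K × K × K) :
    gammaPerm e x = (x.1 + e * x.2.1, x.2.1, x.2.2) := rfl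

@[simp] lemma delta_apply (x : K × K × K) :
    deltaPerm K x = (x.2.1, -x.1, x.2.2) := rfl

@[simp] lemma tau_apply (ε : ℕ) (d : K) (x : K × K × K) :
    tauPerm ε d x = (x.1 + d * x.2.1 ^ 2 + d ^ ε * x.2.2, x.2.1, x.2.2) := rfl

@[simp] lemma frob_apply {K : Type*} [Field K] [Fintype K] [CharP K 3] (x : K) :
    frobPerm K x = x ^ 3 := rfl

@[simp] lemma sigma_apply {K : Type*} [Field K] [Fintype K] [CharP K 3] (x : K × K × K) :
    sigmaPerm K x = (x.1 ^ 3, x.2.1 ^ 3, x.2.2 ^ 3) := rfl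

lemma gamma_zero : gammaPerm (0 : K) = 1 := by
  ext x : 1 <;> simp

lemma gamma_mul (e f : K) : gammaPerm e * gammaPerm f = gammaPerm (e + f) := by
  ext x : 1 <;> simp [Equiv.Perm.mul_apply] <;> ring

lemma beta_mul (ε : ℕ) (l m l' m' : Kˣ) :
    betaPerm ε l m * betaPerm ε l' m' = betaPerm ε (l * l') (m * m') := by
  ext x : 1
  simp [Equiv.Perm.mul_apply]
  constructor
  · ring
  constructor
  · ring
  · push_cast [mul_pow]
    ring

end Identities

section MoreIds
set_option linter.unusedSectionVars false
variable {K : Type*} [Field K] [Fintype K] [CharP K 3]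
variable {r : ℕ} (hr : 1 ≤ r) (hcard : Fintype.card K = 3 ^ r) {ε : ℕ} (hε : ε = 3 ^ (r - 1))

lemma fact3 : Fact (Nat.Prime 3) := ⟨by norm_num⟩

include hr hcard hε in
lemma pow_eps_cube (x : K) : (x ^ ε) ^ 3 = x := by
  rw [← pow_mul, hε, ← pow_succ, Nat.sub_add_cancel hr, ← hcard, FiniteField.pow_card]

include hε in
lemma eps_add (x y : K) : (x + y) ^ ε = x ^ ε + y ^ ε := by
  haveI := fact3
  rw [hε]; exact add_pow_char_pow x y 3 (r-1)

lemma cube_add (x y : K) : (x + y) ^ 3 = x ^ 3 + y ^ 3 := by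
  haveI := fact3
  have := add_pow_char_pow x y 3 1
  simpa using this

include hε in
lemma eps_ne_zero : ε ≠ 0 := by rw [hε]; positivity

include hε in
lemma tau_zero : tauPerm ε (0 : K) = 1 := by
  ext x : 1 <;> simp [zero_pow (eps_ne_zero hε)]

-- Part 1 identities.  t(some e) = deltaPerm K * gammaPerm e
lemma I2 (e u v w : K) :
    (deltaPerm K * gammaPerm e) * alphaPerm u v w
      = alphaPerm v (-u - e*v) w * (deltaPerm K * gammaPerm e) := by
  ext x : 1
  obtain ⟨a, b, c⟩ := x
  simp only [Equiv.Perm.mul_apply, alpha_apply, gamma_apply, delta_apply, Prod.mk.injEq]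
  and_intros <;> first | trivial | ring

lemma I3 (e : K) (l m : Kˣ) :
    (deltaPerm K * gammaPerm e) * betaPerm ε l m
      = betaPerm ε m l * (deltaPerm K * gammaPerm (e * (m : K) * (l : K)⁻¹)) := by
  have hl : (l:K) ≠ 0 := Units.ne_zero l
  ext x : 1
  obtain ⟨a, b, c⟩ := x
  simp only [Equiv.Perm.mul_apply, beta_apply, gamma_apply, delta_apply, Prod.mk.injEq]
  and_intros <;> first | rfl | ring1 | (push_cast; ring1) | (field_simp; (try ring1); done) | (push_cast; field_simp; (try ring1); done) | (push_cast; done)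

include hr hcard hε in
lemma I4 (e : K) :
    (deltaPerm K * gammaPerm e) * sigmaPerm K
      = sigmaPerm K * (deltaPerm K * gammaPerm (e ^ ε)) := by
  have hkey : (e ^ ε) ^ 3 = e := pow_eps_cube hr hcard hε e
  ext x : 1
  obtain ⟨a, b, c⟩ := x
  simp only [Equiv.Perm.mul_apply, sigma_apply, gamma_apply, delta_apply, Prod.mk.injEq]
  and_intros <;> try trivial
  rw [show (-(a + e ^ ε * b)) = (-a) + (-(e^ε*b)) by ring, cube_add,
    show (-(e^ε*b))^3 = -((e^ε)^3 * b^3) by ring, hkey]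
  ring

lemma delta_sq : deltaPerm K * deltaPerm K = betaPerm ε (-1) (-1) := by
  ext x : 1 <;> simp [Equiv.Perm.mul_apply]

lemma I5 (e : K) (he : e ≠ 0) :
    (deltaPerm K * gammaPerm e) * deltaPerm K
      = (betaPerm ε (Units.mk0 (-e⁻¹) (by simpa using he)) (Units.mk0 (-e⁻¹) (by simpa using he))⁻¹
          * gammaPerm (-e)) * (deltaPerm K * gammaPerm (-e⁻¹)) := by
  ext x : 1
  obtain ⟨a, b, c⟩ := x
  simp only [Equiv.Perm.mul_apply, beta_apply, gamma_apply, delta_apply, Prod.mk.injEq,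
    Units.mul_inv, one_pow, Units.val_one, one_mul, Units.val_inv_eq_inv_val, Units.val_mk0,
    inv_neg, inv_inv]
  and_intros <;> first | rfl | ring1 | (push_cast; ring1) | (field_simp; (try ring1); done) | (push_cast; field_simp; (try ring1); done) | (push_cast; field_simp; rw [div_self (Units.ne_zero _)]; simp)

-- Part 2 identities
lemma J1 (d u v w : K) :
    tauPerm ε d * alphaPerm u v w
      = (alphaPerm (u + d*v^2 + d^ε*w) v w * gammaPerm (2*d*v)) * tauPerm ε d := by
  ext x : 1
  obtain ⟨a, b, c⟩ := x
  simp only [Equiv.Perm.mul_apply, alpha_apply, gamma_apply, tau_apply, Prod.mk.injEq]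
  and_intros <;> first | trivial | ring

lemma J2 (d e : K) : tauPerm ε d * gammaPerm e = gammaPerm e * tauPerm ε d := by
  ext x : 1
  obtain ⟨a, b, c⟩ := x
  simp only [Equiv.Perm.mul_apply, gamma_apply, tau_apply, Prod.mk.injEq]
  and_intros <;> first | trivial | ring

include hr hcard hε in
lemma J3 (d : K) (l m : Kˣ) :
    tauPerm ε d * betaPerm ε l m
      = betaPerm ε l m * tauPerm ε (d * (m : K)^2 * ((l : K))⁻¹) := by
  have hl : (l:K) ≠ 0 := Units.ne_zero l
  have hl3 : (l:K)^(3*ε) = (l:K) := by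
    rw [show 3*ε = ε*3 by ring, pow_mul, pow_eps_cube hr hcard hε]
  have expand : (d * (m:K)^2 * (l:K)⁻¹)^ε = d^ε * (m:K)^(2*ε) * ((l:K)^ε)⁻¹ := by
    rw [mul_pow, mul_pow, inv_pow, ← pow_mul, mul_comm 2 ε]
  have hscal : (l:K) * (d * (m:K)^2 * (l:K)⁻¹)^ε = d^ε * ((l:K)*(m:K))^(2*ε) := by
    rw [expand, mul_pow]
    field_simp
    linear_combination (-(d^ε)) * hl3
  have h1 : (l:K) * (d * (m:K)^2 * (l:K)⁻¹) = d * (m:K)^2 := by field_simp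
  ext x : 1
  obtain ⟨a, b, c⟩ := x
  simp only [Equiv.Perm.mul_apply, beta_apply, tau_apply, Prod.mk.injEq]
  and_intros <;> try trivial
  push_cast
  rw [mul_add, mul_add, ← mul_assoc ((l:K)) (d * (m:K)^2 * ((l:K))⁻¹) (b^2), h1,
    ← mul_assoc ((l:K)) ((d * (m:K)^2 * ((l:K))⁻¹)^ε) c, hscal]
  ring

include hr hcard hε in
lemma J4 (d : K) :
    tauPerm ε d * sigmaPerm K = sigmaPerm K * tauPerm ε (d ^ ε) := by
  have hk1 : (d ^ ε) ^ 3 = d := pow_eps_cube hr hcard hε d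
  have hk2 : ((d ^ ε) ^ ε) ^ 3 = d ^ ε := pow_eps_cube hr hcard hε (d ^ ε)
  ext x : 1
  obtain ⟨a, b, c⟩ := x
  simp only [Equiv.Perm.mul_apply, sigma_apply, tau_apply, Prod.mk.injEq]
  and_intros <;> try trivial
  rw [cube_add, cube_add, show (d^ε * b^2)^3 = (d^ε)^3 * (b^2)^3 by ring,
    show ((d^ε)^ε * c)^3 = ((d^ε)^ε)^3 * c^3 by ring, hk1, hk2]
  ring

include hε in
lemma J5 (d e : K) : tauPerm ε d * tauPerm ε e = tauPerm ε (d + e) := by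
  ext x : 1
  obtain ⟨a, b, c⟩ := x
  simp only [Equiv.Perm.mul_apply, tau_apply, Prod.mk.injEq]
  and_intros <;> try trivial
  rw [eps_add hε]; ring

end MoreIds

/-! ### Invariant subgroups used to separate cosets -/

/-- Permutations whose action on the second coordinate depends only on the second
coordinate.  `G₁₂` is contained in this subgroup, while `δ·γ_e`-type elements are not. -/
def PbGrp (K : Type*) [Field K] : Subgroup (Equiv.Perm (K × K × K)) where
  carrier := {g | ∃ φ : Equiv.Perm K, ∀ x : K × K × K, (g x).2.1 = φ x.2.1}
  one_mem' := ⟨Equiv.refl K, fun _ => rfl⟩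
  mul_mem' := by
    rintro g h ⟨φg, hg⟩ ⟨φh, hh⟩
    exact ⟨φh.trans φg, fun x => by
      simp only [Equiv.Perm.mul_apply, Equiv.trans_apply]
      rw [hg (h x), hh x]⟩
  inv_mem' := by
    rintro g ⟨φ, hg⟩
    refine ⟨φ.symm, fun x => ?_⟩
    have := hg (g⁻¹ x)
    rw [Equiv.Perm.coe_inv, Equiv.apply_symm_apply] at this
    exact (Equiv.eq_symm_apply _).mpr this.symm

/-- Permutations preserving the pencil of partitions by the values `a - s·b`, `s ∈ K`.
`G₁₂` is contained in this subgroup, while nontrivial elements of `E` are not. -/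
def PaGrp (K : Type*) [Field K] : Subgroup (Equiv.Perm (K × K × K)) where
  carrier := {g | ∃ (σh : Equiv.Perm K) (ν : K → Equiv.Perm K),
    ∀ (s : K) (x : K × K × K), (g x).1 - σh s * (g x).2.1 = ν s (x.1 - s * x.2.1)}
  one_mem' := ⟨Equiv.refl K, fun _ => Equiv.refl K, fun _ _ => rfl⟩
  mul_mem' := by
    rintro g h ⟨σg, νg, hg⟩ ⟨σh, νh, hh⟩
    refine ⟨σh.trans σg, fun s => (νh s).trans (νg (σh s)), fun s x => ?_⟩
    simp only [Equiv.Perm.mul_apply, Equiv.trans_apply]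
    rw [hg (σh s) (h x), hh s x]
  inv_mem' := by
    rintro g ⟨σg, ν, hg⟩
    refine ⟨σg.symm, fun s => (ν (σg.symm s)).symm, fun s x => ?_⟩
    have := hg (σg.symm s) (g⁻¹ x)
    rw [Equiv.Perm.coe_inv, Equiv.apply_symm_apply, Equiv.apply_symm_apply] at this
    exact (Equiv.eq_symm_apply _).mpr this.symm

section Invariants
variable {K : Type*} [Field K] [Fintype K] [CharP K 3] {ε : ℕ}

lemma G12_le_PbGrp : G12grp K ε ≤ PbGrp K := by
  unfold G12grp QgrpBig Agrp Cgrp Sgrp Tgrp Siggrp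
  refine sup_le (sup_le (sup_le (sup_le ?_ ?_) ?_) ?_) ?_ <;>
    rw [Subgroup.closure_le]
  · rintro g ⟨u, v, w, rfl⟩
    exact ⟨Equiv.addRight v, fun x => rfl⟩
  · rintro g ⟨e, rfl⟩
    exact ⟨Equiv.refl K, fun x => rfl⟩
  · rintro g ⟨μ, rfl⟩
    exact ⟨Units.mulLeft μ, fun x => rfl⟩
  · rintro g ⟨μ, rfl⟩
    exact ⟨Units.mulLeft μ⁻¹, fun x => rfl⟩
  · rintro g hg
    rw [Set.mem_singleton_iff] at hg
    subst hg
    exact ⟨frobPerm K, fun x => rfl⟩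

lemma G12_le_PaGrp : G12grp K ε ≤ PaGrp K := by
  haveI := fact3
  unfold G12grp QgrpBig Agrp Cgrp Sgrp Tgrp Siggrp
  refine sup_le (sup_le (sup_le (sup_le ?_ ?_) ?_) ?_) ?_ <;>
    rw [Subgroup.closure_le]
  · rintro g ⟨u, v, w, rfl⟩
    refine ⟨Equiv.refl K, fun s => Equiv.addRight (u - s * v), fun s x => ?_⟩
    simp only [alpha_apply, Equiv.refl_apply, Equiv.coe_addRight]
    ring
  · rintro g ⟨e, rfl⟩
    refine ⟨Equiv.addRight e, fun _ => Equiv.refl K, fun s x => ?_⟩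
    simp only [gamma_apply, Equiv.refl_apply, Equiv.coe_addRight]
    ring
  · rintro g ⟨μ, rfl⟩
    refine ⟨Units.mulLeft (μ ^ 2 * μ⁻¹), fun _ => Units.mulLeft (μ ^ 2), fun s x => ?_⟩
    simp only [beta_apply, Units.mulLeft_apply]
    push_cast
    have hμ : (μ : K) ≠ 0 := Units.ne_zero μ
    field_simp
  · rintro g ⟨μ, rfl⟩
    refine ⟨Units.mulLeft (μ * (μ⁻¹)⁻¹), fun _ => Units.mulLeft μ, fun s x => ?_⟩
    simp only [beta_apply, Units.mulLeft_apply]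
    push_cast
    have hμ : (μ : K) ≠ 0 := Units.ne_zero μ
    field_simp
  · rintro g hg
    rw [Set.mem_singleton_iff] at hg
    subst hg
    refine ⟨frobPerm K, fun _ => frobPerm K, fun s x => ?_⟩
    simp only [sigma_apply, frob_apply]
    rw [sub_pow_char]
    ring

end Invariants

open Subgroup

theorem coverLemma {G : Type*} [Group G] (H : Subgroup G) (S : Set G) {I : Type*} [Finite I]
    (t : I → G)
    (hinj : ∀ i j, t i * (t j)⁻¹ ∈ H → i = j)
    (hrel : ∀ s ∈ S, ∀ i, ∃ j, t i * s * (t j)⁻¹ ∈ H) :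
    ∀ g ∈ Subgroup.closure S, ∀ i, ∃ j, t i * g * (t j)⁻¹ ∈ H := by
  intro g hg
  induction hg using Subgroup.closure_induction with
  | mem x hx => exact hrel x hx
  | one => intro i; exact ⟨i, by simpa using H.one_mem⟩
  | mul x y hx hy px py =>
      intro i
      obtain ⟨j, hj⟩ := px i
      obtain ⟨k, hk⟩ := py j
      exact ⟨k, by have := H.mul_mem hj hk; group at this ⊢; simpa using this⟩
  | inv x hx px =>
      have hF : ∀ i, t i * x * (t (Classical.choose (px i)))⁻¹ ∈ H :=
        fun i => Classical.choose_spec (px i)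
      have hFinj : Function.Injective (fun i => Classical.choose (px i)) := by
        intro i i' h
        apply hinj
        have h1 := hF i
        have h2 := hF i'
        simp only at h
        rw [h] at h1
        have := H.mul_mem h1 (H.inv_mem h2)
        group at this ⊢
        simpa using this
      intro i
      obtain ⟨j, hj⟩ := Finite.surjective_of_injective hFinj i
      refine ⟨j, ?_⟩
      have := H.inv_mem (hF j)
      simp only at hj
      rw [hj] at this
      group at this ⊢
      simpa using this

theorem indexLemma {G : Type*} [Group G] (H G₀ : Subgroup G) (S : Set G)
    (hle : G₀ ≤ Subgroup.closure S) {I : Type*} [Finite I] (t : I → G) (i₀ : I)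
    (h1 : t i₀ = 1) (htmem : ∀ i, t i ∈ G₀)
    (hinj : ∀ i j, t i * (t j)⁻¹ ∈ H → i = j)
    (hrel : ∀ s ∈ S, ∀ i, ∃ j, t i * s * (t j)⁻¹ ∈ H) :
    H.relIndex G₀ = Nat.card I := by
  have hcov := coverLemma H S t hinj hrel
  have hbij : Function.Bijective (fun i : I =>
      (QuotientGroup.mk ⟨(t i)⁻¹, G₀.inv_mem (htmem i)⟩ : G₀ ⧸ (H.subgroupOf G₀))) := by
    constructor
    · intro i j hij
      apply hinj
      simp only [QuotientGroup.eq] at hij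
      rw [Subgroup.mem_subgroupOf] at hij
      simpa using hij
    · intro q
      obtain ⟨g, rfl⟩ := QuotientGroup.mk_surjective q
      obtain ⟨j, hj⟩ := hcov (↑g)⁻¹ ((Subgroup.closure S).inv_mem (hle g.2)) i₀
      rw [h1, one_mul] at hj
      refine ⟨j, ?_⟩
      show (QuotientGroup.mk _ : G₀ ⧸ (H.subgroupOf G₀)) = QuotientGroup.mk g
      rw [QuotientGroup.eq, Subgroup.mem_subgroupOf]
      have := H.inv_mem hj
      group at this ⊢
      simpa using this
  rw [Subgroup.relIndex, Subgroup.index, ← Nat.card_eq_of_bijective _ hbij]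

/-! ### Membership helpers -/

section Mems
variable {K : Type*} [Field K] [Fintype K] [CharP K 3] {ε : ℕ}

lemma Agrp_le_G12 : Agrp K ≤ G12grp K ε := by
  unfold G12grp QgrpBig
  exact (le_sup_left.trans le_sup_left : Agrp K ≤ _ ⊔ Sgrp K ε).trans
    (le_sup_left.trans le_sup_left)

lemma Cgrp_le_G12 : Cgrp K ≤ G12grp K ε := by
  unfold G12grp QgrpBig
  exact (le_sup_right.trans le_sup_left : Cgrp K ≤ _ ⊔ Sgrp K ε).trans
    (le_sup_left.trans le_sup_left)

lemma Sgrp_le_G12 : Sgrp K ε ≤ G12grp K ε := by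
  unfold G12grp
  exact le_sup_right.trans (le_sup_left.trans le_sup_left)

lemma Tgrp_le_G12 : Tgrp K ε ≤ G12grp K ε := by
  unfold G12grp
  exact le_sup_right.trans le_sup_left

lemma Siggrp_le_G12 : Siggrp K ≤ G12grp K ε := by
  unfold G12grp
  exact le_sup_right

lemma mem_G12_alpha (u v w : K) : alphaPerm u v w ∈ G12grp K ε :=
  Agrp_le_G12 (Subgroup.subset_closure ⟨u, v, w, rfl⟩)

lemma mem_G12_gamma (e : K) : gammaPerm e ∈ G12grp K ε :=
  Cgrp_le_G12 (Subgroup.subset_closure ⟨e, rfl⟩)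

lemma mem_G12_betaS (μ : Kˣ) : betaPerm ε (μ ^ 2) μ ∈ G12grp K ε :=
  Sgrp_le_G12 (Subgroup.subset_closure ⟨μ, rfl⟩)

lemma mem_G12_betaT (μ : Kˣ) : betaPerm ε μ μ⁻¹ ∈ G12grp K ε :=
  Tgrp_le_G12 (Subgroup.subset_closure ⟨μ, rfl⟩)

lemma mem_G12_sigma : sigmaPerm K ∈ G12grp K ε :=
  Siggrp_le_G12 (Subgroup.subset_closure rfl)

lemma mem_G12_betaSwap (μ : Kˣ) : betaPerm ε μ (μ ^ 2) ∈ G12grp K ε := by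
  have h : betaPerm ε (μ ^ 2) μ * betaPerm ε μ⁻¹ (μ⁻¹)⁻¹ = betaPerm ε μ (μ ^ 2) := by
    rw [beta_mul]
    congr 1
    · group
    · rw [inv_inv, pow_two]
  rw [← h]
  exact mul_mem (mem_G12_betaS μ) (mem_G12_betaT μ⁻¹)

lemma mem_G12_betaNeg : betaPerm ε (-1 : Kˣ) (-1 : Kˣ) ∈ G12grp K ε := by
  have h : ((-1 : Kˣ))⁻¹ = -1 := by simp
  rw [show (betaPerm ε (-1 : Kˣ) (-1 : Kˣ)) = betaPerm ε (-1 : Kˣ) ((-1 : Kˣ))⁻¹ by rw [h]]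
  exact mem_G12_betaT (-1)

lemma mem_G1_delta : deltaPerm K ∈ G1grp K ε := by
  have hmem : deltaPerm K ∈ Dgrp K := Subgroup.subset_closure rfl
  have hle : Dgrp K ≤ G1grp K ε := by
    unfold G1grp Mgrp
    exact (((le_sup_right.trans le_sup_left).trans le_sup_right).trans
      (le_sup_left.trans le_sup_left))
  exact hle hmem

lemma mem_G1_gamma (e : K) : gammaPerm e ∈ G1grp K ε := by
  have hmem : gammaPerm e ∈ Cgrp K := Subgroup.subset_closure ⟨e, rfl⟩
  have hle : Cgrp K ≤ G1grp K ε := by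
    unfold G1grp Mgrp
    exact (((le_sup_left.trans le_sup_left).trans le_sup_right).trans
      (le_sup_left.trans le_sup_left))
  exact hle hmem

lemma mem_G2_tau (d : K) : tauPerm ε d ∈ G2grp K ε := by
  have hmem : tauPerm ε d ∈ Egrp K ε := Subgroup.subset_closure ⟨d, rfl⟩
  have hle : Egrp K ε ≤ G2grp K ε := by
    unfold G2grp
    exact (le_sup_right.trans le_sup_left).trans le_sup_left
  exact hle hmem

end Mems

/-! ### Coset separation -/

lemma eval_trick {β : Type*} (g h : Equiv.Perm β) (x : β) : (g * h⁻¹) (h x) = g x := by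
  simp

section Sep
variable {K : Type*} [Field K] [Fintype K] [CharP K 3]
variable {r : ℕ} (hr : 1 ≤ r) (hcard : Fintype.card K = 3 ^ r) {ε : ℕ} (hε : ε = 3 ^ (r - 1))

lemma sep_none_some (f : K) :
    ¬ ((1 : Equiv.Perm (K × K × K)) * (deltaPerm K * gammaPerm f)⁻¹ ∈ G12grp K ε) := by
  intro h
  obtain ⟨φ, hφ⟩ := G12_le_PbGrp h
  have e1 := hφ ((deltaPerm K * gammaPerm f) (0, 0, 0))
  have e2 := hφ ((deltaPerm K * gammaPerm f) (-f, 1, 0))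
  rw [eval_trick] at e1 e2
  simp [Equiv.Perm.mul_apply] at e1 e2
  rw [← e1] at e2
  exact one_ne_zero e2

lemma sep_some_none (e : K) :
    ¬ ((deltaPerm K * gammaPerm e) * (1 : Equiv.Perm (K × K × K))⁻¹ ∈ G12grp K ε) := by
  intro h
  obtain ⟨φ, hφ⟩ := G12_le_PbGrp h
  have e1 := hφ (0, 0, 0)
  have e2 := hφ (1, 0, 0)
  simp [Equiv.Perm.mul_apply] at e1 e2
  rw [← e1] at e2
  exact one_ne_zero (neg_eq_zero.mp e2)

lemma sep_some_some (e f : K)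
    (h : (deltaPerm K * gammaPerm e) * (deltaPerm K * gammaPerm f)⁻¹ ∈ G12grp K ε) :
    e = f := by
  obtain ⟨φ, hφ⟩ := G12_le_PbGrp h
  have e1 := hφ ((deltaPerm K * gammaPerm f) (f, 0, 0))
  have e2 := hφ ((deltaPerm K * gammaPerm f) (0, 1, 0))
  rw [eval_trick] at e1 e2
  simp [Equiv.Perm.mul_apply] at e1 e2
  rw [← e1] at e2
  exact neg_injective e2

include hr hcard hε in
lemma sep_tau (i j : K)
    (h : tauPerm ε i * (tauPerm ε j)⁻¹ ∈ G12grp K ε) : i = j := by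
  obtain ⟨σh, ν, hν⟩ := G12_le_PaGrp h
  have e0 : ∀ a : K, ν 0 a = a := by
    intro a
    have := hν 0 (tauPerm ε j (a, 0, 0))
    rw [eval_trick] at this
    simpa using this.symm
  have e1 := hν 0 (tauPerm ε j (0, 0, 1))
  rw [eval_trick] at e1
  simp [e0] at e1
  calc i = (i ^ ε) ^ 3 := (pow_eps_cube hr hcard hε i).symm
  _ = (j ^ ε) ^ 3 := by rw [e1]
  _ = j := pow_eps_cube hr hcard hε j

end Sep

/-! ### Generating sets and the main theorem -/

def S1set (K : Type*) [Field K] [Fintype K] [CharP K 3] (ε : ℕ) :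
    Set (Equiv.Perm (K × K × K)) :=
  {g | ∃ u v w : K, g = alphaPerm u v w} ∪ {g | ∃ e : K, g = gammaPerm e} ∪ {deltaPerm K} ∪
    {g | ∃ μ : Kˣ, g = betaPerm ε μ μ⁻¹} ∪ {g | ∃ μ : Kˣ, g = betaPerm ε (μ ^ 2) μ} ∪
    {sigmaPerm K}

def S2set (K : Type*) [Field K] [Fintype K] [CharP K 3] (ε : ℕ) :
    Set (Equiv.Perm (K × K × K)) :=
  {g | ∃ u v w : K, g = alphaPerm u v w} ∪ {g | ∃ e : K, g = gammaPerm e} ∪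
    {g | ∃ μ : Kˣ, g = betaPerm ε (μ ^ 2) μ} ∪ {g | ∃ d : K, g = tauPerm ε d} ∪
    {g | ∃ μ : Kˣ, g = betaPerm ε μ μ⁻¹} ∪ {sigmaPerm K}

section Main
variable {K : Type*} [Field K] [Fintype K] [CharP K 3]
variable {r : ℕ} (hr : 1 ≤ r) (hcard : Fintype.card K = 3 ^ r) {ε : ℕ} (hε : ε = 3 ^ (r - 1))

lemma G1_le_closure : G1grp K ε ≤ Subgroup.closure (S1set K ε) := by
  unfold G1grp Mgrp Agrp Cgrp Dgrp Tgrp Sgrp Siggrp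
  refine sup_le (sup_le (sup_le ?_ (sup_le (sup_le ?_ ?_) ?_)) ?_) ?_ <;>
    refine Subgroup.closure_mono ?_ <;> intro g hg
  · exact Or.inl (Or.inl (Or.inl (Or.inl (Or.inl hg))))
  · exact Or.inl (Or.inl (Or.inl (Or.inl (Or.inr hg))))
  · exact Or.inl (Or.inl (Or.inl (Or.inr hg)))
  · exact Or.inl (Or.inl (Or.inr hg))
  · exact Or.inl (Or.inr hg)
  · exact Or.inr hg

lemma G2_le_closure : G2grp K ε ≤ Subgroup.closure (S2set K ε) := by
  unfold G2grp QgrpBig Agrp Cgrp Egrp Tgrp Sgrp Siggrp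
  refine sup_le (sup_le (sup_le (sup_le (sup_le ?_ ?_) ?_) ?_) ?_) ?_ <;>
    refine Subgroup.closure_mono ?_ <;> intro g hg
  · exact Or.inl (Or.inl (Or.inl (Or.inl (Or.inl hg))))
  · exact Or.inl (Or.inl (Or.inl (Or.inl (Or.inr hg))))
  · exact Or.inl (Or.inl (Or.inl (Or.inr hg)))
  · exact Or.inl (Or.inl (Or.inr hg))
  · exact Or.inl (Or.inr hg)
  · exact Or.inr hg

/-- Coset representatives for `G₁₂` in `G₁`. -/
def t1 (K : Type*) [Field K] : Option K → Equiv.Perm (K × K × K) :=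
  fun i => i.elim 1 (fun e => deltaPerm K * gammaPerm e)

lemma coset_of_eq {G : Type*} [Group G] {H : Subgroup G} {x y h : G}
    (heq : x = h * y) (hh : h ∈ H) : x * y⁻¹ ∈ H := by
  rw [heq, mul_inv_cancel_right]; exact hh

include hr hcard hε in
lemma hrel1 : ∀ s ∈ S1set K ε, ∀ i, ∃ j, t1 K i * s * (t1 K j)⁻¹ ∈ G12grp K ε := by
  intro s hs i
  simp only [S1set, Set.mem_union, Set.mem_setOf_eq, Set.mem_singleton_iff] at hs
  cases i with
  | none =>
    rcases hs with ((((⟨u, v, w, rfl⟩ | ⟨e, rfl⟩) | rfl) | ⟨μ, rfl⟩) | ⟨μ, rfl⟩) | rfl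
    · exact ⟨none, by simpa [t1] using mem_G12_alpha u v w⟩
    · exact ⟨none, by simpa [t1] using mem_G12_gamma e⟩
    · refine ⟨some 0, ?_⟩
      show (1 : Equiv.Perm (K × K × K)) * deltaPerm K * (deltaPerm K * gammaPerm 0)⁻¹ ∈ _
      rw [gamma_zero, mul_one, one_mul, mul_inv_cancel]
      exact (G12grp K ε).one_mem
    · exact ⟨none, by simpa [t1] using mem_G12_betaT μ⟩
    · exact ⟨none, by simpa [t1] using mem_G12_betaS μ⟩
    · exact ⟨none, by simpa [t1] using mem_G12_sigma⟩
  | some e =>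
    rcases hs with ((((⟨u, v, w, rfl⟩ | ⟨f, rfl⟩) | rfl) | ⟨μ, rfl⟩) | ⟨μ, rfl⟩) | rfl
    · exact ⟨some e, coset_of_eq (I2 e u v w) (mem_G12_alpha v (-u - e*v) w)⟩
    · refine ⟨some (e + f), coset_of_eq (show deltaPerm K * gammaPerm e * gammaPerm f
        = 1 * (deltaPerm K * gammaPerm (e + f)) by rw [one_mul, mul_assoc, gamma_mul])
        ((G12grp K ε).one_mem)⟩
    · by_cases he : e = 0
      · subst he
        refine ⟨none, ?_⟩
        show deltaPerm K * gammaPerm 0 * deltaPerm K * (1 : Equiv.Perm (K × K × K))⁻¹ ∈ _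
        rw [gamma_zero, mul_one, inv_one, mul_one, delta_sq]
        exact mem_G12_betaNeg
      · refine ⟨some (-e⁻¹), coset_of_eq (I5 (ε := ε) e he) (mul_mem ?_ (mem_G12_gamma (-e)))⟩
        exact mem_G12_betaT _
    · refine ⟨some (e * ((μ⁻¹ : Kˣ) : K) * ((μ : Kˣ) : K)⁻¹),
        coset_of_eq (I3 e μ μ⁻¹) ?_⟩
      have : betaPerm ε μ⁻¹ μ = betaPerm ε μ⁻¹ (μ⁻¹)⁻¹ := by rw [inv_inv]
      rw [this]
      exact mem_G12_betaT μ⁻¹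
    · exact ⟨some (e * ((μ : Kˣ) : K) * (((μ ^ 2 : Kˣ) : K))⁻¹),
        coset_of_eq (I3 e (μ ^ 2) μ) (mem_G12_betaSwap μ)⟩
    · exact ⟨some (e ^ ε), coset_of_eq (I4 hr hcard hε e) mem_G12_sigma⟩

include hr hcard hε in
lemma hrel2 : ∀ s ∈ S2set K ε, ∀ d : K, ∃ j, tauPerm ε d * s * (tauPerm ε j)⁻¹ ∈ G12grp K ε := by
  intro s hs d
  simp only [S2set, Set.mem_union, Set.mem_setOf_eq, Set.mem_singleton_iff] at hs
  rcases hs with ((((⟨u, v, w, rfl⟩ | ⟨e, rfl⟩) | ⟨μ, rfl⟩) | ⟨e, rfl⟩) | ⟨μ, rfl⟩) | rfl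
  · exact ⟨d, coset_of_eq (J1 d u v w)
      (mul_mem (mem_G12_alpha _ v w) (mem_G12_gamma (2*d*v)))⟩
  · exact ⟨d, coset_of_eq (J2 d e) (mem_G12_gamma e)⟩
  · exact ⟨d * ((μ : Kˣ) : K)^2 * (((μ ^ 2 : Kˣ) : K))⁻¹,
      coset_of_eq (J3 hr hcard hε d (μ ^ 2) μ) (mem_G12_betaS μ)⟩
  · exact ⟨d + e, coset_of_eq (show tauPerm ε d * tauPerm ε e = 1 * tauPerm ε (d + e)
      by rw [one_mul, J5 hε]) ((G12grp K ε).one_mem)⟩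
  · exact ⟨d * ((μ⁻¹ : Kˣ) : K)^2 * (((μ : Kˣ) : K))⁻¹,
      coset_of_eq (J3 hr hcard hε d μ μ⁻¹) (mem_G12_betaT μ)⟩
  · exact ⟨d ^ ε, coset_of_eq (J4 hr hcard hε d) mem_G12_sigma⟩

end Main

/-- From the proof of Lemma 2.12: `|G₁ : G₁₂| = q + 1` and `|G₂ : G₁₂| = q`,
where `G₁₂ = ⟨Q, S, T, Σ⟩`. -/
theorem stmt13 (r : ℕ) (hr : 1 ≤ r) (K : Type*) [Field K] [Fintype K] [CharP K 3]
    (hcard : Fintype.card K = 3 ^ r) (ε : ℕ) (hε : ε = 3 ^ (r - 1)) :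
    (G12grp K ε).relIndex (G1grp K ε) = 3 ^ r + 1
    ∧ (G12grp K ε).relIndex (G2grp K ε) = 3 ^ r := by
  constructor
  · have hinj1 : ∀ i j : Option K, t1 K i * (t1 K j)⁻¹ ∈ G12grp K ε → i = j := by
      intro i j h
      match i, j with
      | none, none => rfl
      | none, some f => exact absurd h (sep_none_some f)
      | some e, none => exact absurd h (sep_some_none e)
      | some e, some f => exact congrArg some (sep_some_some e f h)
    have htm : ∀ i, t1 K i ∈ G1grp K ε := by
      intro i
      cases i with
      | none => exact one_mem _
      | some e => exact mul_mem mem_G1_delta (mem_G1_gamma e)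
    have h := indexLemma (G12grp K ε) (G1grp K ε) (S1set K ε) G1_le_closure (t1 K) none rfl
      htm hinj1 (hrel1 hr hcard hε)
    rw [h, Nat.card_eq_fintype_card, Fintype.card_option, hcard]
  · have h := indexLemma (G12grp K ε) (G2grp K ε) (S2set K ε) G2_le_closure
      (fun d : K => tauPerm ε d) 0 (tau_zero hε) (fun d => mem_G2_tau d)
      (fun i j h => sep_tau hr hcard hε i j h) (hrel2 hr hcard hε)
    rw [h, Nat.card_eq_fintype_card, hcard]
end

section
/- Let K₁ = ⟨V, M⟩ and K₂ = ⟨V, C, E, T⟩ as subgroups of Sym(Ω). Then K₁ ∩ K₂ = ⟨V, C, T⟩. -/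
open Equiv

variable (K : Type*) [Field K]

/-- `K₁ = ⟨V, M⟩`. -/
def K1grp (K : Type*) [Field K] (ε : ℕ) : Subgroup (Equiv.Perm (K × K × K)) :=
  Vgrp K ⊔ Mgrp K ε

/-- `K₂ = ⟨V, C, E, T⟩`. -/
def K2grp (K : Type*) [Field K] (ε : ℕ) : Subgroup (Equiv.Perm (K × K × K)) :=
  Vgrp K ⊔ Cgrp K ⊔ Egrp K ε ⊔ Tgrp K ε

/-!
Every generator of `K₁` is an affine map of the `(a,b)`-plane with linear part in `SL₂`, fixing
`c`, while every generator of `K₂` permutes the fibres of `(a,b,c) ↦ b`. A map of the first kind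
that permutes these fibres has upper triangular linear part `[[p, q], [0, p⁻¹]]`, so it factors
into elements of `V`, `C` and `T`.
-/

namespace Equiv.Perm

def fiberPermuting {X Y : Type*} (f : X → Y) : Subgroup (Perm X) where
  carrier := {g | ∃ σ : Perm Y, ∀ x, f (g x) = σ (f x)}
  one_mem' := ⟨1, fun _ => rfl⟩
  mul_mem' := by
    rintro g h ⟨σ, hσ⟩ ⟨τ, hτ⟩
    exact ⟨σ * τ, fun x => by rw [mul_apply, hσ, hτ, mul_apply]⟩
  inv_mem' := by
    rintro g ⟨σ, hσ⟩
    exact ⟨σ⁻¹, fun x => by rw [eq_inv_iff_eq, ← hσ, ← mul_apply, mul_inv_cancel, one_apply]⟩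

end Equiv.Perm

open Equiv.Perm

def slAffine (K : Type*) [CommRing K] : Subgroup (Perm (K × K × K)) where
  carrier := {g | ∃ p q r s u v : K, p * s - q * r = 1 ∧
    ∀ x : K × K × K, g x = (p * x.1 + q * x.2.1 + u, r * x.1 + s * x.2.1 + v, x.2.2)}
  one_mem' := ⟨1, 0, 0, 1, 0, 0, by ring, fun x => by simp⟩
  mul_mem' := by
    rintro g₁ g₂ ⟨p₁, q₁, r₁, s₁, u₁, v₁, h₁, H₁⟩ ⟨p₂, q₂, r₂, s₂, u₂, v₂, h₂, H₂⟩
    refine ⟨p₁ * p₂ + q₁ * r₂, p₁ * q₂ + q₁ * s₂, r₁ * p₂ + s₁ * r₂, r₁ * q₂ + s₁ * s₂,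
      p₁ * u₂ + q₁ * v₂ + u₁, r₁ * u₂ + s₁ * v₂ + v₁,
      by linear_combination (p₂ * s₂ - q₂ * r₂) * h₁ + h₂, fun x => ?_⟩
    rw [mul_apply, H₂, H₁]
    exact Prod.ext (by ring) (Prod.ext (by ring) rfl)
  inv_mem' := by
    rintro g ⟨p, q, r, s, u, v, h, H⟩
    refine ⟨s, -q, -r, p, -(s * u) + q * v, r * u - p * v, by linear_combination h, fun x => ?_⟩
    rw [eq_comm, eq_inv_iff_eq, H]
    exact Prod.ext (by linear_combination (x.1 - u) * h)
      (Prod.ext (by linear_combination (x.2.1 - v) * h) rfl)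

variable {K}

lemma alphaPerm_mem_slAffine (u v : K) : alphaPerm u v 0 ∈ slAffine K :=
  ⟨1, 0, 0, 1, u, v, by ring, fun x => by simp [alphaPerm]⟩

lemma gammaPerm_mem_slAffine (e : K) : gammaPerm e ∈ slAffine K :=
  ⟨1, e, 0, 1, 0, 0, by ring, fun x => by simp [gammaPerm]⟩

lemma deltaPerm_mem_slAffine : deltaPerm K ∈ slAffine K :=
  ⟨0, 1, -1, 0, 0, 0, by ring, fun x => by simp [deltaPerm]⟩

lemma betaPerm_inv_mem_slAffine (ε : ℕ) (μ : Kˣ) : betaPerm ε μ μ⁻¹ ∈ slAffine K :=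
  ⟨μ, 0, 0, (μ⁻¹ : Kˣ), 0, 0, by simp, fun x => by simp [betaPerm]⟩

lemma K1grp_le_slAffine (ε : ℕ) : K1grp K ε ≤ slAffine K := by
  simp only [K1grp, Mgrp, Vgrp, Cgrp, Dgrp, Tgrp, sup_le_iff, Subgroup.closure_le,
    Set.singleton_subset_iff]
  refine ⟨?_, ⟨?_, deltaPerm_mem_slAffine⟩, ?_⟩
  · rintro _ ⟨u, v, rfl⟩; exact alphaPerm_mem_slAffine u v
  · rintro _ ⟨e, rfl⟩; exact gammaPerm_mem_slAffine e
  · rintro _ ⟨μ, rfl⟩; exact betaPerm_inv_mem_slAffine ε μ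

lemma K2grp_le_fiberPermuting (ε : ℕ) :
    K2grp K ε ≤ fiberPermuting (fun x : K × K × K => x.2.1) := by
  simp only [K2grp, Vgrp, Cgrp, Egrp, Tgrp, sup_le_iff, Subgroup.closure_le]
  refine ⟨⟨⟨?_, ?_⟩, ?_⟩, ?_⟩
  · rintro _ ⟨u, v, rfl⟩; exact ⟨Equiv.addRight v, fun x => rfl⟩
  · rintro _ ⟨e, rfl⟩; exact ⟨1, fun x => rfl⟩
  · rintro _ ⟨d, rfl⟩; exact ⟨1, fun x => rfl⟩
  · rintro _ ⟨μ, rfl⟩; exact ⟨Equiv.mulLeft₀ _ (μ⁻¹ : Kˣ).ne_zero, fun x => rfl⟩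

lemma mem_Vgrp_sup_Cgrp_sup_Tgrp_of_mem_slAffine_of_mem_fiberPermuting (ε : ℕ)
    {g : Perm (K × K × K)} (hA : g ∈ slAffine K)
    (hB : g ∈ fiberPermuting (fun x : K × K × K => x.2.1)) :
    g ∈ Vgrp K ⊔ Cgrp K ⊔ Tgrp K ε := by
  obtain ⟨p, q, r, s, u, v, hdet, hg⟩ := hA
  obtain ⟨σ, hσ⟩ := hB
  have hr : r = 0 := by
    have h := (hσ (1, 0, 0)).trans (hσ (0, 0, 0)).symm
    simpa [hg] using h
  subst hr
  let μ : Kˣ := ⟨p, s, by linear_combination hdet, by linear_combination hdet⟩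
  have hfactor : g = alphaPerm u v 0 * gammaPerm (q * p) * betaPerm ε μ μ⁻¹ := by
    ext x
    · simp only [mul_apply, hg, betaPerm, gammaPerm, alphaPerm, coe_fn_mk, μ, Units.inv_mk]
      linear_combination (-(q * x.2.1)) * hdet
    · simp [hg, betaPerm, gammaPerm, alphaPerm, μ]
    · simp [hg, betaPerm, gammaPerm, alphaPerm]
  rw [hfactor]
  refine mul_mem (mul_mem ?_ ?_) ?_
  · exact Subgroup.mem_sup_left (Subgroup.mem_sup_left (Subgroup.subset_closure ⟨u, v, rfl⟩))
  · exact Subgroup.mem_sup_left (Subgroup.mem_sup_right (Subgroup.subset_closure ⟨q * p, rfl⟩))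
  · exact Subgroup.mem_sup_right (Subgroup.subset_closure ⟨μ, rfl⟩)

theorem stmt14_general (K : Type*) [Field K] (ε : ℕ) :
    K1grp K ε ⊓ K2grp K ε = Vgrp K ⊔ Cgrp K ⊔ Tgrp K ε := by
  refine le_antisymm (fun g hg => ?_) (le_inf ?_ ?_)
  · exact mem_Vgrp_sup_Cgrp_sup_Tgrp_of_mem_slAffine_of_mem_fiberPermuting ε
      (K1grp_le_slAffine ε hg.1) (K2grp_le_fiberPermuting ε hg.2)
  · simp only [K1grp, Mgrp]
    exact sup_le (sup_le le_sup_left (le_sup_left.trans le_sup_left |>.trans le_sup_right))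
      (le_sup_right.trans le_sup_right)
  · simp only [K2grp]
    exact sup_le (sup_le (le_sup_left.trans le_sup_left |>.trans le_sup_left)
      (le_sup_right.trans le_sup_left |>.trans le_sup_left)) le_sup_right

/-- Lemma 3.1 (part): `K₁ ∩ K₂ = ⟨V, C, T⟩`. -/
theorem stmt14 (r : ℕ) (hr : 1 ≤ r) (K : Type*) [Field K] [Fintype K]
    (hcard : Fintype.card K = 3 ^ r) (ε : ℕ) (hε : ε = 3 ^ (r - 1)) :
    K1grp K ε ⊓ K2grp K ε = Vgrp K ⊔ Cgrp K ⊔ Tgrp K ε :=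
  stmt14_general K ε
end

section
/- Let K₁ = ⟨V, M⟩, K₂ = ⟨V, C, E, T⟩, K = ⟨K₁, K₂⟩, and for c ∈ F_q let Ω_c = {(a,b,c) : a,b ∈ F_q} ⊆ Ω. Then: (i) every element of K maps each block Ω_c onto itself, while F permutes the blocks {Ω_c : c ∈ F_q} regularly (for each pair c, c' there is a unique element of F sending Ω_c to Ω_{c'}); (ii) the centralizer of F in ⟨S, Σ⟩ is ⟨β_{1,−1}⟩, and F ∩ ⟨S,Σ⟩ = 1; (iii) an element g of ⟨F, S, Σ⟩ maps every block Ω_c onto itself if and only if g ∈ ⟨β_{1,−1}⟩; (iv) ⟨F, S, Σ⟩ normalizes both K₁ and K₂, and K₁ ∩ ⟨F,S,Σ⟩ = K₂ ∩ ⟨F,S,Σ⟩ = 1. -/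
open Equiv

variable (K : Type*) [Field K]

namespace Stmt15Aux
set_option linter.unusedSectionVars false
set_option linter.unreachableTactic false
set_option linter.unusedTactic false
set_option linter.unnecessarySeqFocus false


@[simp] lemma alphaPerm_apply {K : Type*} [Field K] (u v w : K) (x : K × K × K) :
    alphaPerm u v w x = (x.1 + u, x.2.1 + v, x.2.2 + w) := rfl

@[simp] lemma betaPerm_apply {K : Type*} [Field K] (ε : ℕ) (l m : Kˣ) (x : K × K × K) :
    betaPerm ε l m x
      = ((l : K) * x.1, (m : K) * x.2.1, (((l * m) ^ (2 * ε) : Kˣ) : K) * x.2.2) := rfl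

@[simp] lemma gammaPerm_apply {K : Type*} [Field K] (e : K) (x : K × K × K) :
    gammaPerm e x = (x.1 + e * x.2.1, x.2.1, x.2.2) := rfl

@[simp] lemma deltaPerm_apply {K : Type*} [Field K] (x : K × K × K) :
    deltaPerm K x = (x.2.1, -x.1, x.2.2) := rfl

@[simp] lemma tauPerm_apply {K : Type*} [Field K] (ε : ℕ) (d : K) (x : K × K × K) :
    tauPerm ε d x = (x.1 + d * x.2.1 ^ 2 + d ^ ε * x.2.2, x.2.1, x.2.2) := rfl

@[simp] lemma sigmaPerm_apply {K : Type*} [Field K] [Fintype K] [CharP K 3] (x : K × K × K) :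
    sigmaPerm K x = (x.1 ^ 3, x.2.1 ^ 3, x.2.2 ^ 3) := rfl

/-- Build a subgroup of a finite group from a set closed under `1` and `*`. -/
def sgOf {G : Type*} [Group G] [Finite G] (s : Set G) (h1 : (1 : G) ∈ s)
    (hmul : ∀ a ∈ s, ∀ b ∈ s, a * b ∈ s) : Subgroup G where
  carrier := s
  one_mem' := h1
  mul_mem' := fun {a b} ha hb => hmul a ha b hb
  inv_mem' := by
    intro g hg
    have hp : ∀ n : ℕ, g ^ n ∈ s := by
      intro n
      induction n with
      | zero => simpa using h1
      | succ m ih => rw [pow_succ]; exact hmul _ ih _ hg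
    have h0 : 0 < orderOf g := orderOf_pos g
    have hinv : g⁻¹ = g ^ (orderOf g - 1) := by
      apply inv_eq_of_mul_eq_one_right
      rw [← pow_succ', Nat.sub_add_cancel h0]
      exact pow_orderOf_eq_one g
    rw [hinv]; exact hp _

lemma mem_sgOf {G : Type*} [Group G] [Finite G] {s : Set G} {h1} {hmul} {g : G} :
    g ∈ sgOf s h1 hmul ↔ g ∈ s := Iff.rfl

lemma closure_subset_of {G : Type*} [Group G] [Finite G] {s t : Set G} (h1 : (1 : G) ∈ s)
    (hmul : ∀ a ∈ s, ∀ b ∈ s, a * b ∈ s) (hts : t ⊆ s) :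
    ∀ g ∈ Subgroup.closure t, g ∈ s :=
  fun _ hg => (Subgroup.closure_le (sgOf s h1 hmul)).mpr hts hg

lemma conj_helper {G : Type*} [Group G] {x y z : G} (h : x * y = z * x) :
    x * y * x⁻¹ = z := by rw [h, mul_inv_cancel_right]

section Sets
variable (K : Type*) [Field K]

/-- permutations fixing the third coordinate pointwise -/
def stabS : Set (Perm (K × K × K)) := {g | ∀ x : K × K × K, (g x).2.2 = x.2.2}

/-- permutations fixing the origin -/
def origS : Set (Perm (K × K × K)) := {g | g (0, 0, 0) = (0, 0, 0)}

/-- the set of `α_{(0,0,w)}` -/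
def fSetS : Set (Perm (K × K × K)) := {g | ∃ w : K, g = alphaPerm 0 0 w}

/-- shape of elements of `⟨F, S, Σ⟩` -/
def fsS : Set (Perm (K × K × K)) :=
  {g | ∃ (k : ℕ) (μ : Kˣ) (w : K), ∀ x : K × K × K,
    g x = ((μ : K) ^ 2 * x.1 ^ 3 ^ k, (μ : K) * x.2.1 ^ 3 ^ k,
           (μ : K) ^ 2 * x.2.2 ^ 3 ^ k + w)}

/-- shape of elements of `K₁`: affine maps of determinant 1 on each block -/
def h1S : Set (Perm (K × K × K)) :=
  {g | ∃ p q r s t₁ t₂ : K, p * s - q * r = 1 ∧ ∀ x : K × K × K,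
    g x = (p * x.1 + q * x.2.1 + t₁, r * x.1 + s * x.2.1 + t₂, x.2.2)}

/-- shape of elements of `K₂` -/
def h2S : Set (Perm (K × K × K)) :=
  {g | ∃ (m : Kˣ) (t : K) (P : K → K → K), ∀ x : K × K × K,
    g x = ((m : K) * x.1 + P x.2.1 x.2.2, ((m⁻¹ : Kˣ) : K) * x.2.1 + t, x.2.2)}

end Sets

section SetLemmas
variable {K : Type*} [Field K] [Fintype K]

lemma stabS_one : (1 : Perm (K × K × K)) ∈ stabS K := fun _ => rfl

lemma stabS_mul : ∀ a ∈ stabS K, ∀ b ∈ stabS K, a * b ∈ stabS K := by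
  intro a ha b hb x
  rw [Perm.mul_apply, ha, hb]

lemma origS_one : (1 : Perm (K × K × K)) ∈ origS K := rfl

lemma origS_mul : ∀ a ∈ origS K, ∀ b ∈ origS K, a * b ∈ origS K := by
  intro a ha b hb
  show (a * b) (0,0,0) = (0,0,0)
  rw [Perm.mul_apply, hb, ha]

lemma alpha_zero_eq_one : alphaPerm (0:K) 0 0 = 1 := by
  ext x : 1 <;> simp

lemma fSetS_one : (1 : Perm (K × K × K)) ∈ fSetS K := ⟨0, (alpha_zero_eq_one).symm⟩

lemma fSetS_mul : ∀ a ∈ fSetS K, ∀ b ∈ fSetS K, a * b ∈ fSetS K := by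
  rintro _ ⟨w, rfl⟩ _ ⟨w', rfl⟩
  refine ⟨w' + w, Equiv.ext fun x => ?_⟩
  simp [Perm.mul_apply, add_assoc]

lemma stabS_block {g : Perm (K × K × K)} (h : g ∈ stabS K) (c : K) :
    ⇑g '' {x : K × K × K | x.2.2 = c} = {x : K × K × K | x.2.2 = c} := by
  ext y
  constructor
  · rintro ⟨x, hx, rfl⟩
    simpa [h x] using hx
  · intro hy
    refine ⟨g⁻¹ y, ?_, g.apply_symm_apply y⟩
    have := h (g⁻¹ y)
    rw [show g (g⁻¹ y) = y from g.apply_symm_apply y] at this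
    simpa [this] using hy

lemma alpha_block (w c : K) :
    ⇑(alphaPerm (0:K) 0 w) '' {x : K × K × K | x.2.2 = c} = {x : K × K × K | x.2.2 = c + w} := by
  ext y
  constructor
  · rintro ⟨x, hx, rfl⟩
    simp only [Set.mem_setOf_eq] at hx ⊢
    simp [hx]
  · intro hy
    refine ⟨(y.1, y.2.1, y.2.2 - w), ?_, ?_⟩
    · simp only [Set.mem_setOf_eq] at hy ⊢
      rw [hy]; ring
    · simp

end SetLemmas



section MulLemmas
variable {K : Type*} [Field K] [Fintype K]

lemma fsS_one' : ∀ x : K × K × K,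
    (1 : Perm (K × K × K)) x = (((1:Kˣ) : K) ^ 2 * x.1 ^ 3 ^ 0, ((1:Kˣ) : K) * x.2.1 ^ 3 ^ 0,
      ((1:Kˣ) : K) ^ 2 * x.2.2 ^ 3 ^ 0 + 0) := fun x => by simp

lemma fsS_mul_aux [CharP K 3] (k j : ℕ) (μ ν : Kˣ) (u w : K) (a b : Perm (K × K × K))
    (ha : ∀ x : K × K × K, a x = ((μ : K) ^ 2 * x.1 ^ 3 ^ k, (μ : K) * x.2.1 ^ 3 ^ k,
           (μ : K) ^ 2 * x.2.2 ^ 3 ^ k + w))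
    (hb : ∀ x : K × K × K, b x = ((ν : K) ^ 2 * x.1 ^ 3 ^ j, (ν : K) * x.2.1 ^ 3 ^ j,
           (ν : K) ^ 2 * x.2.2 ^ 3 ^ j + u)) :
    ∀ x : K × K × K, (a * b) x
      = (((μ * ν ^ 3 ^ k : Kˣ) : K) ^ 2 * x.1 ^ 3 ^ (j + k),
         ((μ * ν ^ 3 ^ k : Kˣ) : K) * x.2.1 ^ 3 ^ (j + k),
         ((μ * ν ^ 3 ^ k : Kˣ) : K) ^ 2 * x.2.2 ^ 3 ^ (j + k) + ((μ : K) ^ 2 * u ^ 3 ^ k + w)) := by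
  intro x
  haveI : Fact (Nat.Prime 3) := ⟨by norm_num⟩
  rw [Perm.mul_apply, hb, ha]
  have hadd : ((ν:K)^2 * x.2.2 ^ 3^j + u) ^ 3^k
      = ((ν:K)^2 * x.2.2 ^ 3^j) ^ 3^k + u ^ 3^k := add_pow_char_pow _ _ 3 k
  simp only [Prod.mk.injEq, hadd, Units.val_mul, Units.val_pow_eq_pow_val, pow_add, pow_mul]
  refine ⟨by ring, by ring, by ring⟩

lemma h1S_mul_aux (p q r s t₁ t₂ p' q' r' s' t₁' t₂' : K) (a b : Perm (K × K × K))
    (hdet : p * s - q * r = 1) (hdet' : p' * s' - q' * r' = 1)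
    (ha : ∀ x : K × K × K, a x = (p * x.1 + q * x.2.1 + t₁, r * x.1 + s * x.2.1 + t₂, x.2.2))
    (hb : ∀ x : K × K × K, b x = (p' * x.1 + q' * x.2.1 + t₁', r' * x.1 + s' * x.2.1 + t₂', x.2.2)) :
    ((p*p'+q*r') * (r*q'+s*s') - (p*q'+q*s') * (r*p'+s*r') = 1) ∧
    ∀ x : K × K × K, (a * b) x = ((p*p'+q*r') * x.1 + (p*q'+q*s') * x.2.1 + (p*t₁'+q*t₂'+t₁),
      (r*p'+s*r') * x.1 + (r*q'+s*s') * x.2.1 + (r*t₁'+s*t₂'+t₂), x.2.2) := by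
  constructor
  · have h : (p*p'+q*r')*(r*q'+s*s') - (p*q'+q*s')*(r*p'+s*r') = (p*s-q*r)*(p'*s'-q'*r') := by ring
    rw [h, hdet, hdet', mul_one]
  · intro x
    rw [Perm.mul_apply, hb, ha]
    simp only [Prod.mk.injEq]
    exact ⟨by ring, by ring, trivial⟩

lemma h2S_mul_aux (m m' : Kˣ) (t t' : K) (P P' : K → K → K) (a b : Perm (K × K × K))
    (ha : ∀ x : K × K × K, a x = ((m : K) * x.1 + P x.2.1 x.2.2, ((m⁻¹ : Kˣ) : K) * x.2.1 + t, x.2.2))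
    (hb : ∀ x : K × K × K, b x = ((m' : K) * x.1 + P' x.2.1 x.2.2, ((m'⁻¹ : Kˣ) : K) * x.2.1 + t', x.2.2)) :
    ∀ x : K × K × K, (a * b) x
      = ((((m * m' : Kˣ)) : K) * x.1 + ((m : K) * P' x.2.1 x.2.2 + P (((m'⁻¹ : Kˣ) : K) * x.2.1 + t') x.2.2),
         ((((m * m')⁻¹ : Kˣ)) : K) * x.2.1 + (((m⁻¹ : Kˣ) : K) * t' + t), x.2.2) := by
  intro x
  rw [Perm.mul_apply, hb, ha]
  simp only [Prod.mk.injEq, mul_inv_rev, Units.val_mul]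
  exact ⟨by ring, by ring, trivial⟩

end MulLemmas

section Conj
variable {K : Type*} [Field K] (ε : ℕ)

lemma cube_add [CharP K 3] (a b : K) : (a + b) ^ 3 = a ^ 3 + b ^ 3 := by
  haveI : Fact (Nat.Prime 3) := ⟨by norm_num⟩
  exact add_pow_char a b 3

lemma cube_neg (a : K) : (-a) ^ 3 = -(a ^ 3) := Odd.neg_pow ⟨1, by norm_num⟩ a

-- conjugation by α_{(0,0,w)}
lemma cfa (w u v : K) :
    alphaPerm 0 0 w * alphaPerm u v 0 * (alphaPerm 0 0 w)⁻¹ = alphaPerm u v 0 :=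
  conj_helper (Equiv.ext fun ⟨a, b, c⟩ => by
    simp only [Perm.mul_apply, alphaPerm_apply, Prod.mk.injEq]
    all_goals repeat' constructor
    all_goals try ring
    all_goals (field_simp; try ring))

lemma cfg (w e : K) :
    alphaPerm 0 0 w * gammaPerm e * (alphaPerm 0 0 w)⁻¹ = gammaPerm e :=
  conj_helper (Equiv.ext fun ⟨a, b, c⟩ => by
    simp only [Perm.mul_apply, alphaPerm_apply, gammaPerm_apply, Prod.mk.injEq]
    all_goals repeat' constructor
    all_goals try ring
    all_goals (field_simp; try ring))

lemma cfd (w : K) :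
    alphaPerm 0 0 w * deltaPerm K * (alphaPerm 0 0 w)⁻¹ = deltaPerm K :=
  conj_helper (Equiv.ext fun ⟨a, b, c⟩ => by
    simp only [Perm.mul_apply, alphaPerm_apply, deltaPerm_apply, Prod.mk.injEq]
    all_goals repeat' constructor
    all_goals try ring
    all_goals (field_simp; try ring))

lemma cft (w d : K) :
    alphaPerm 0 0 w * tauPerm ε d * (alphaPerm 0 0 w)⁻¹
      = alphaPerm (-(d ^ ε * w)) 0 0 * tauPerm ε d :=
  conj_helper (Equiv.ext fun ⟨a, b, c⟩ => by
    simp only [Perm.mul_apply, alphaPerm_apply, tauPerm_apply, Prod.mk.injEq]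
    all_goals repeat' constructor
    all_goals try ring
    all_goals (field_simp; try ring))

lemma cfb (w : K) (ν : Kˣ) :
    alphaPerm 0 0 w * betaPerm ε ν ν⁻¹ * (alphaPerm 0 0 w)⁻¹ = betaPerm ε ν ν⁻¹ :=
  conj_helper (Equiv.ext fun ⟨a, b, c⟩ => by
    simp only [Perm.mul_apply, alphaPerm_apply, betaPerm_apply, mul_inv_cancel, one_pow,
      Units.val_one, Prod.mk.injEq]
    all_goals repeat' constructor
    all_goals try ring
    all_goals (field_simp; try ring))

-- conjugation by β_{μ²,μ}
variable (hk2 : ∀ μ : Kˣ, ((μ ^ 2 * μ) ^ (2 * ε) : Kˣ) = μ ^ 2)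

include hk2

lemma cba (μ : Kˣ) (u v : K) :
    betaPerm ε (μ ^ 2) μ * alphaPerm u v 0 * (betaPerm ε (μ ^ 2) μ)⁻¹
      = alphaPerm ((μ : K) ^ 2 * u) ((μ : K) * v) 0 :=
  conj_helper (Equiv.ext fun ⟨a, b, c⟩ => by
    simp only [Perm.mul_apply, alphaPerm_apply, betaPerm_apply, hk2,
      Units.val_pow_eq_pow_val, Prod.mk.injEq]
    all_goals repeat' constructor
    all_goals try ring
    all_goals (field_simp; try ring))

lemma cbg (μ : Kˣ) (e : K) :
    betaPerm ε (μ ^ 2) μ * gammaPerm e * (betaPerm ε (μ ^ 2) μ)⁻¹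
      = gammaPerm ((μ : K) * e) :=
  conj_helper (Equiv.ext fun ⟨a, b, c⟩ => by
    simp only [Perm.mul_apply, gammaPerm_apply, betaPerm_apply, hk2,
      Units.val_pow_eq_pow_val, Prod.mk.injEq]
    all_goals repeat' constructor
    all_goals try ring
    all_goals (field_simp; try ring))

lemma cbd (μ : Kˣ) :
    betaPerm ε (μ ^ 2) μ * deltaPerm K * (betaPerm ε (μ ^ 2) μ)⁻¹
      = betaPerm ε μ μ⁻¹ * deltaPerm K :=
  conj_helper (Equiv.ext fun ⟨a, b, c⟩ => by
    have hμ0 : (μ : K) ≠ 0 := Units.ne_zero μ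
    simp only [Perm.mul_apply, deltaPerm_apply, betaPerm_apply, hk2, mul_inv_cancel, one_pow,
      Units.val_one, Units.val_pow_eq_pow_val, Units.val_inv_eq_inv_val, Prod.mk.injEq]
    all_goals repeat' constructor
    all_goals try ring
    all_goals (field_simp; try ring))

lemma cbt (μ : Kˣ) (d : K) :
    betaPerm ε (μ ^ 2) μ * tauPerm ε d * (betaPerm ε (μ ^ 2) μ)⁻¹ = tauPerm ε d :=
  conj_helper (Equiv.ext fun ⟨a, b, c⟩ => by
    simp only [Perm.mul_apply, tauPerm_apply, betaPerm_apply, hk2,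
      Units.val_pow_eq_pow_val, Prod.mk.injEq]
    all_goals repeat' constructor
    all_goals try ring
    all_goals (field_simp; try ring))

lemma cbb (μ ν : Kˣ) :
    betaPerm ε (μ ^ 2) μ * betaPerm ε ν ν⁻¹ * (betaPerm ε (μ ^ 2) μ)⁻¹ = betaPerm ε ν ν⁻¹ :=
  conj_helper (Equiv.ext fun ⟨a, b, c⟩ => by
    simp only [Perm.mul_apply, betaPerm_apply, hk2, mul_inv_cancel, one_pow,
      Units.val_one, Units.val_pow_eq_pow_val, Prod.mk.injEq]
    all_goals repeat' constructor
    all_goals try ring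
    all_goals (field_simp; try ring))

omit hk2

-- conjugation by σ
variable [Fintype K] [CharP K 3]

lemma csa (u v : K) :
    sigmaPerm K * alphaPerm u v 0 * (sigmaPerm K)⁻¹ = alphaPerm (u ^ 3) (v ^ 3) 0 :=
  conj_helper (Equiv.ext fun ⟨a, b, c⟩ => by
    simp only [Perm.mul_apply, alphaPerm_apply, sigmaPerm_apply, add_zero, Prod.mk.injEq,
      cube_add]
    all_goals repeat' constructor
    all_goals try ring
    all_goals (field_simp; try ring))

lemma csg (e : K) :
    sigmaPerm K * gammaPerm e * (sigmaPerm K)⁻¹ = gammaPerm (e ^ 3) :=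
  conj_helper (Equiv.ext fun ⟨a, b, c⟩ => by
    simp only [Perm.mul_apply, gammaPerm_apply, sigmaPerm_apply, Prod.mk.injEq, cube_add,
      mul_pow]
    all_goals repeat' constructor
    all_goals try ring
    all_goals (field_simp; try ring))

lemma csd : sigmaPerm K * deltaPerm K * (sigmaPerm K)⁻¹ = deltaPerm K :=
  conj_helper (Equiv.ext fun ⟨a, b, c⟩ => by
    simp only [Perm.mul_apply, deltaPerm_apply, sigmaPerm_apply, Prod.mk.injEq, cube_neg]
    all_goals repeat' constructor
    all_goals try ring
    all_goals (field_simp; try ring))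

lemma cst (d : K) :
    sigmaPerm K * tauPerm ε d * (sigmaPerm K)⁻¹ = tauPerm ε (d ^ 3) :=
  conj_helper (Equiv.ext fun ⟨a, b, c⟩ => by
    simp only [Perm.mul_apply, tauPerm_apply, sigmaPerm_apply, Prod.mk.injEq, cube_add,
      mul_pow]
    all_goals repeat' constructor
    all_goals try ring
    all_goals (field_simp; try ring))

lemma csb (ν : Kˣ) :
    sigmaPerm K * betaPerm ε ν ν⁻¹ * (sigmaPerm K)⁻¹ = betaPerm ε (ν ^ 3) (ν ^ 3)⁻¹ :=
  conj_helper (Equiv.ext fun ⟨a, b, c⟩ => by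
    have hν0 : (ν : K) ≠ 0 := Units.ne_zero ν
    simp only [Perm.mul_apply, betaPerm_apply, mul_inv_cancel, one_pow, Units.val_one,
      Units.val_pow_eq_pow_val, Units.val_inv_eq_inv_val, Prod.mk.injEq, mul_pow, inv_pow, sigmaPerm_apply]
    all_goals repeat' constructor
    all_goals try ring
    all_goals (field_simp; try ring))

end Conj


lemma conj_red {G : Type*} [Group G] (g₀ : G) (Kg : Subgroup G) (tset : Set G)
    (hKg : Kg = Subgroup.closure tset) (hgen : ∀ a ∈ tset, g₀ * a * g₀⁻¹ ∈ Kg) :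
    ∀ n ∈ Kg, g₀ * n * g₀⁻¹ ∈ Kg := by
  intro n hn
  have hle : Kg ≤ Kg.comap (MulAut.conj g₀).toMonoidHom := by
    conv_lhs => rw [hKg]
    refine (Subgroup.closure_le _).mpr fun a ha => ?_
    simpa [Subgroup.mem_comap, MulEquiv.coe_toMonoidHom, MulAut.conj_apply] using hgen a ha
  simpa [Subgroup.mem_comap, MulEquiv.coe_toMonoidHom, MulAut.conj_apply] using hle hn

end Stmt15Aux

set_option maxHeartbeats 1000000 in
/-- Lemma 3.2: the blocks `Ω_c = {(a,b,c) : a,b ∈ F_q}`.  `K = ⟨K₁, K₂⟩` acts trivially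
on the set of blocks, `F` permutes the blocks regularly, `C_{⟨S,Σ⟩}(F) = ⟨β_{1,-1}⟩`
with `F ∩ ⟨S,Σ⟩ = 1`, the kernel of the action of `⟨F,S,Σ⟩` on the blocks is `⟨β_{1,-1}⟩`,
and `⟨F,S,Σ⟩` normalizes `K₁` and `K₂` with `K_i ∩ ⟨F,S,Σ⟩ = 1`. -/
theorem stmt15 (r : ℕ) (hr : 1 ≤ r) (K : Type*) [Field K] [Fintype K] [CharP K 3]
    (hcard : Fintype.card K = 3 ^ r) (ε : ℕ) (hε : ε = 3 ^ (r - 1)) :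
    ((∀ g ∈ K1grp K ε ⊔ K2grp K ε, ∀ c : K,
        ⇑g '' {x : K × K × K | x.2.2 = c} = {x : K × K × K | x.2.2 = c})
      ∧ (∀ c c' : K, ∃! g : Equiv.Perm (K × K × K), g ∈ Fgrp K ∧
          ⇑g '' {x : K × K × K | x.2.2 = c} = {x : K × K × K | x.2.2 = c'}))
    ∧ ((Sgrp K ε ⊔ Siggrp K) ⊓ Subgroup.centralizer (Fgrp K : Set (Equiv.Perm (K × K × K)))
        = Subgroup.closure {betaPerm ε (1 : Kˣ) (-1)}
      ∧ Fgrp K ⊓ (Sgrp K ε ⊔ Siggrp K) = ⊥)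
    ∧ (∀ g ∈ Fgrp K ⊔ Sgrp K ε ⊔ Siggrp K,
        ((∀ c : K, ⇑g '' {x : K × K × K | x.2.2 = c} = {x : K × K × K | x.2.2 = c})
          ↔ g ∈ Subgroup.closure {betaPerm ε (1 : Kˣ) (-1)}))
    ∧ ((∀ g ∈ Fgrp K ⊔ Sgrp K ε ⊔ Siggrp K,
        (∀ k ∈ K1grp K ε, g * k * g⁻¹ ∈ K1grp K ε) ∧ (∀ k ∈ K2grp K ε, g * k * g⁻¹ ∈ K2grp K ε))
      ∧ K1grp K ε ⊓ (Fgrp K ⊔ Sgrp K ε ⊔ Siggrp K) = ⊥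
      ∧ K2grp K ε ⊓ (Fgrp K ⊔ Sgrp K ε ⊔ Siggrp K) = ⊥) := by
  classical
  haveI : Fact (Nat.Prime 3) := ⟨by norm_num⟩
  -- numerical facts
  have hq3 : 3 * ε = Fintype.card K := by
    rw [hcard, hε, ← pow_succ', Nat.sub_add_cancel hr]
  have hpowq : ∀ a : K, a ^ (3 * ε) = a := fun a => by
    rw [hq3]; exact FiniteField.pow_card a
  have hupow : ∀ μ : Kˣ, μ ^ (3 * ε) = μ := fun μ => by
    ext; rw [Units.val_pow_eq_pow_val]; exact hpowq _
  have hk2 : ∀ μ : Kˣ, ((μ ^ 2 * μ) ^ (2 * ε) : Kˣ) = μ ^ 2 := by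
    intro μ
    have h1 : μ ^ 2 * μ = μ ^ 3 := (pow_succ μ 2).symm
    have h2 : 3 * (2 * ε) = 3 * ε * 2 := by ring
    rw [h1, ← pow_mul, h2, pow_mul, hupow]
  have hκ1 : (((1 : Kˣ) * (-1)) ^ (2 * ε) : Kˣ) = 1 := by
    rw [one_mul, pow_mul, neg_one_sq, one_pow]
  have hβ : ∀ x : K × K × K, betaPerm ε (1 : Kˣ) (-1) x = (x.1, -x.2.1, x.2.2) := by
    intro x; rw [Stmt15Aux.betaPerm_apply, hκ1]; simp
  -- group presentations as closures
  have hK1eq : K1grp K ε = Subgroup.closure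
      ({g : Equiv.Perm (K×K×K) | ∃ u v : K, g = alphaPerm u v 0} ∪
        (({g | ∃ e : K, g = gammaPerm e} ∪ {deltaPerm K}) ∪
          {g | ∃ μ : Kˣ, g = betaPerm ε μ μ⁻¹})) := by
    rw [Subgroup.closure_union, Subgroup.closure_union, Subgroup.closure_union]; rfl
  have hK2eq : K2grp K ε = Subgroup.closure
      ((({g : Equiv.Perm (K×K×K) | ∃ u v : K, g = alphaPerm u v 0} ∪
          {g | ∃ e : K, g = gammaPerm e}) ∪ {g | ∃ d : K, g = tauPerm ε d}) ∪
        {g | ∃ μ : Kˣ, g = betaPerm ε μ μ⁻¹}) := by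
    rw [Subgroup.closure_union, Subgroup.closure_union, Subgroup.closure_union]; rfl
  have hFSSeq : Fgrp K ⊔ Sgrp K ε ⊔ Siggrp K = Subgroup.closure
      (({g : Equiv.Perm (K×K×K) | ∃ w : K, g = alphaPerm 0 0 w} ∪
        {g | ∃ μ : Kˣ, g = betaPerm ε (μ^2) μ}) ∪ {sigmaPerm K}) := by
    rw [Subgroup.closure_union, Subgroup.closure_union]; rfl
  have hSSeq : Sgrp K ε ⊔ Siggrp K = Subgroup.closure
      ({g : Equiv.Perm (K×K×K) | ∃ μ : Kˣ, g = betaPerm ε (μ^2) μ} ∪ {sigmaPerm K}) := by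
    rw [Subgroup.closure_union]; rfl
  -- generators in K1 / K2
  have memV1 : ∀ u v : K, alphaPerm u v 0 ∈ K1grp K ε := fun u v => by
    rw [hK1eq]; exact Subgroup.subset_closure (Or.inl ⟨u, v, rfl⟩)
  have memC1 : ∀ e : K, gammaPerm e ∈ K1grp K ε := fun e => by
    rw [hK1eq]; exact Subgroup.subset_closure (Or.inr (Or.inl (Or.inl ⟨e, rfl⟩)))
  have memD1 : deltaPerm K ∈ K1grp K ε := by
    rw [hK1eq]; exact Subgroup.subset_closure (Or.inr (Or.inl (Or.inr rfl)))
  have memT1 : ∀ μ : Kˣ, betaPerm ε μ μ⁻¹ ∈ K1grp K ε := fun μ => by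
    rw [hK1eq]; exact Subgroup.subset_closure (Or.inr (Or.inr ⟨μ, rfl⟩))
  have memV2 : ∀ u v : K, alphaPerm u v 0 ∈ K2grp K ε := fun u v => by
    rw [hK2eq]; exact Subgroup.subset_closure (Or.inl (Or.inl (Or.inl ⟨u, v, rfl⟩)))
  have memC2 : ∀ e : K, gammaPerm e ∈ K2grp K ε := fun e => by
    rw [hK2eq]; exact Subgroup.subset_closure (Or.inl (Or.inl (Or.inr ⟨e, rfl⟩)))
  have memE2 : ∀ d : K, tauPerm ε d ∈ K2grp K ε := fun d => by
    rw [hK2eq]; exact Subgroup.subset_closure (Or.inl (Or.inr ⟨d, rfl⟩))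
  have memT2 : ∀ μ : Kˣ, betaPerm ε μ μ⁻¹ ∈ K2grp K ε := fun μ => by
    rw [hK2eq]; exact Subgroup.subset_closure (Or.inr ⟨μ, rfl⟩)
  -- K1 ≤ h1S
  have hK1h1 : ∀ g ∈ K1grp K ε, g ∈ Stmt15Aux.h1S K := by
    rw [hK1eq]
    refine Stmt15Aux.closure_subset_of ?_ ?_ ?_
    · exact ⟨1, 0, 0, 1, 0, 0, by norm_num, fun x => by
        simp only [Equiv.Perm.coe_one, id_eq, one_mul, zero_mul, add_zero, zero_add]⟩
    · rintro a ⟨p, q, rr, s, t1, t2, hdet, ha⟩ b ⟨p', q', rr', s', t1', t2', hdet', hb⟩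
      obtain ⟨h1, h2⟩ := Stmt15Aux.h1S_mul_aux p q rr s t1 t2 p' q' rr' s' t1' t2' a b hdet hdet' ha hb
      exact ⟨_, _, _, _, _, _, h1, h2⟩
    · rintro g (⟨u, v, rfl⟩ | ((⟨e, rfl⟩ | rfl) | ⟨μ, rfl⟩))
      · exact ⟨1, 0, 0, 1, u, v, by norm_num, fun x => by
          simp only [Stmt15Aux.alphaPerm_apply, Prod.mk.injEq]
          all_goals repeat' constructor
          all_goals try ring⟩
      · exact ⟨1, e, 0, 1, 0, 0, by norm_num, fun x => by
          simp only [Stmt15Aux.gammaPerm_apply, Prod.mk.injEq]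
          all_goals repeat' constructor
          all_goals try ring⟩
      · exact ⟨0, 1, -1, 0, 0, 0, by norm_num, fun x => by
          simp only [Stmt15Aux.deltaPerm_apply, Prod.mk.injEq]
          all_goals repeat' constructor
          all_goals try ring⟩
      · refine ⟨(μ : K), 0, 0, ((μ⁻¹ : Kˣ) : K), 0, 0, by simp, fun x => by
          simp only [Stmt15Aux.betaPerm_apply, mul_inv_cancel, one_pow, Units.val_one,
            Prod.mk.injEq]
          all_goals repeat' constructor
          all_goals try ring⟩
  -- K2 ≤ h2S
  have hK2h2 : ∀ g ∈ K2grp K ε, g ∈ Stmt15Aux.h2S K := by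
    rw [hK2eq]
    refine Stmt15Aux.closure_subset_of ?_ ?_ ?_
    · exact ⟨1, 0, fun _ _ => 0, fun x => by simp⟩
    · rintro a ⟨m, t, P, ha⟩ b ⟨m', t', P', hb⟩
      exact ⟨m * m', ((m⁻¹ : Kˣ) : K) * t' + t,
        fun y z => (m : K) * P' y z + P (((m'⁻¹ : Kˣ) : K) * y + t') z,
        Stmt15Aux.h2S_mul_aux m m' t t' P P' a b ha hb⟩
    · rintro g ((( ⟨u, v, rfl⟩ | ⟨e, rfl⟩) | ⟨d, rfl⟩) | ⟨μ, rfl⟩)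
      · exact ⟨1, v, fun _ _ => u, fun x => by
          simp only [Stmt15Aux.alphaPerm_apply, Units.val_one, inv_one, Prod.mk.injEq]
          all_goals repeat' constructor
          all_goals try ring⟩
      · exact ⟨1, 0, fun y z => e * y, fun x => by
          simp only [Stmt15Aux.gammaPerm_apply, Units.val_one, inv_one, Prod.mk.injEq]
          all_goals repeat' constructor
          all_goals try ring⟩
      · exact ⟨1, 0, fun y z => d * y ^ 2 + d ^ ε * z, fun x => by
          simp only [Stmt15Aux.tauPerm_apply, Units.val_one, inv_one, Prod.mk.injEq]
          all_goals repeat' constructor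
          all_goals try ring⟩
      · refine ⟨μ, 0, fun _ _ => 0, fun x => by
          simp only [Stmt15Aux.betaPerm_apply, mul_inv_cancel, one_pow, Units.val_one,
            Prod.mk.injEq]
          all_goals repeat' constructor
          all_goals try ring⟩
  have hstab1 : ∀ g ∈ K1grp K ε, ∀ x : K × K × K, (g x).2.2 = x.2.2 := by
    intro g hg x
    obtain ⟨p, q, rr, s, t1, t2, _, hf⟩ := hK1h1 g hg
    rw [hf]
  have hstab2 : ∀ g ∈ K2grp K ε, ∀ x : K × K × K, (g x).2.2 = x.2.2 := by
    intro g hg x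
    obtain ⟨m, t, P, hf⟩ := hK2h2 g hg
    rw [hf]
  -- FSΣ ≤ fsS
  have hFSSfs : ∀ g ∈ Fgrp K ⊔ Sgrp K ε ⊔ Siggrp K, g ∈ Stmt15Aux.fsS K := by
    rw [hFSSeq]
    refine Stmt15Aux.closure_subset_of ?_ ?_ ?_
    · exact ⟨0, 1, 0, Stmt15Aux.fsS_one'⟩
    · rintro a ⟨k, μ, w, ha⟩ b ⟨j, ν, u, hb⟩
      exact ⟨j + k, μ * ν ^ 3 ^ k, _, Stmt15Aux.fsS_mul_aux k j μ ν u w a b ha hb⟩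
    · rintro g ((⟨w, rfl⟩ | ⟨μ, rfl⟩) | rfl)
      · exact ⟨0, 1, w, fun x => by
          simp only [Stmt15Aux.alphaPerm_apply, Units.val_one, pow_zero, pow_one, one_pow,
            one_mul, Prod.mk.injEq]
          all_goals repeat' constructor
          all_goals try ring⟩
      · exact ⟨0, μ, 0, fun x => by
          rw [Stmt15Aux.betaPerm_apply, hk2 μ]
          simp only [Units.val_pow_eq_pow_val, pow_zero, pow_one, Prod.mk.injEq]
          all_goals repeat' constructor
          all_goals try ring⟩
      · exact ⟨1, 1, 0, fun x => by
          simp only [Stmt15Aux.sigmaPerm_apply, Units.val_one, pow_one, one_pow, one_mul,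
            Prod.mk.injEq]
          all_goals repeat' constructor
          all_goals try ring⟩
  have hSSle : Sgrp K ε ⊔ Siggrp K ≤ Fgrp K ⊔ Sgrp K ε ⊔ Siggrp K :=
    sup_le_sup_right le_sup_right _
  have hSSfs : ∀ g ∈ Sgrp K ε ⊔ Siggrp K, g ∈ Stmt15Aux.fsS K :=
    fun g hg => hFSSfs g (hSSle hg)
  have hSSorig : ∀ g ∈ Sgrp K ε ⊔ Siggrp K, g ((0:K), (0:K), (0:K)) = ((0:K), (0:K), (0:K)) := by
    rw [hSSeq]
    refine Stmt15Aux.closure_subset_of Stmt15Aux.origS_one Stmt15Aux.origS_mul ?_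
    rintro g (⟨μ, rfl⟩ | rfl)
    · show betaPerm ε (μ^2) μ (0,0,0) = (0,0,0)
      simp
    · show sigmaPerm K (0,0,0) = (0,0,0)
      simp only [Stmt15Aux.sigmaPerm_apply]
      norm_num
  -- F ⊆ translations of third coordinate
  have hFf : ∀ g ∈ Fgrp K, ∃ w : K, g = alphaPerm 0 0 w :=
    Stmt15Aux.closure_subset_of Stmt15Aux.fSetS_one Stmt15Aux.fSetS_mul (fun _ h => h)
  have h0pow : ∀ k : ℕ, (0:K) ^ 3 ^ k = 0 := fun k => zero_pow (by positivity)
  -- forcing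
  have hforce : ∀ (k : ℕ) (μ : Kˣ), (∀ c : K, (μ:K)^2 * c ^ 3 ^ k = c) →
      ((μ:K)^2 = 1 ∧ ∀ c : K, c ^ 3 ^ k = c) := by
    intro k μ h
    have h1 := h 1
    rw [one_pow, mul_one] at h1
    refine ⟨h1, fun c => ?_⟩
    have h2 := h c
    rwa [h1, one_mul] at h2
  have hcases : ∀ (g : Equiv.Perm (K × K × K)) (k : ℕ) (μ : Kˣ),
      (∀ x : K × K × K, g x = ((μ:K)^2 * x.1 ^ 3 ^ k, (μ:K) * x.2.1 ^ 3 ^ k,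
        (μ:K)^2 * x.2.2 ^ 3 ^ k + 0)) →
      (μ:K)^2 = 1 → (∀ c : K, c ^ 3 ^ k = c) →
      g = 1 ∨ g = betaPerm ε (1 : Kˣ) (-1) := by
    intro g k μ hg hμ hid
    have hsq : (μ:K) * (μ:K) = 1 := by
      have h := hμ; rw [pow_two] at h; exact h
    rcases mul_self_eq_one_iff.mp hsq with h | h
    · left
      refine Equiv.ext fun x => ?_
      rw [hg x, hμ, h]
      simp [hid]
    · right
      refine Equiv.ext fun x => ?_
      rw [hg x, hβ x, hμ, h]
      simp [hid]
  -- basic facts about β = β_{1,-1}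
  have hβS : betaPerm ε (1:Kˣ) (-1) ∈ Sgrp K ε :=
    Subgroup.subset_closure ⟨-1, by rw [neg_one_sq]⟩
  have hβstab : ∀ x : K × K × K, (betaPerm ε (1:Kˣ) (-1) x).2.2 = x.2.2 :=
    fun x => by rw [hβ x]
  have hβcomm : ∀ w : K, alphaPerm 0 0 w * betaPerm ε (1:Kˣ) (-1)
      = betaPerm ε (1:Kˣ) (-1) * alphaPerm 0 0 w := by
    intro w
    refine Equiv.ext fun x => ?_
    simp [Equiv.Perm.mul_apply, hβ]
  have hβcen : betaPerm ε (1:Kˣ) (-1) ∈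
      Subgroup.centralizer (Fgrp K : Set (Equiv.Perm (K × K × K))) := by
    rw [Subgroup.mem_centralizer_iff]
    intro h hh
    have hle : Fgrp K ≤ Subgroup.centralizer {betaPerm ε (1:Kˣ) (-1)} := by
      refine (Subgroup.closure_le _).mpr ?_
      rintro g ⟨w, rfl⟩
      rw [SetLike.mem_coe, Subgroup.mem_centralizer_iff]
      intro y hy
      rw [Set.mem_singleton_iff] at hy
      subst hy
      exact (hβcomm w).symm
    exact (Subgroup.mem_centralizer_iff.mp (hle hh) _ (Set.mem_singleton _)).symm
  have hclosβstab : ∀ g ∈ Subgroup.closure {betaPerm ε (1:Kˣ) (-1)},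
      ∀ x : K × K × K, (g x).2.2 = x.2.2 := by
    refine Stmt15Aux.closure_subset_of Stmt15Aux.stabS_one Stmt15Aux.stabS_mul ?_
    intro g hg
    rw [Set.mem_singleton_iff] at hg
    subst hg
    exact hβstab
  -- Part (i)
  have hpart1a : ∀ g ∈ K1grp K ε ⊔ K2grp K ε, ∀ c : K,
      ⇑g '' {x : K × K × K | x.2.2 = c} = {x : K × K × K | x.2.2 = c} := by
    have hle : K1grp K ε ⊔ K2grp K ε ≤
        Stmt15Aux.sgOf (Stmt15Aux.stabS K) Stmt15Aux.stabS_one Stmt15Aux.stabS_mul :=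
      sup_le (fun a ha => hstab1 a ha) (fun a ha => hstab2 a ha)
    intro g hg c
    exact Stmt15Aux.stabS_block (hle hg) c
  have hpart1b : ∀ c c' : K, ∃! g : Equiv.Perm (K × K × K), g ∈ Fgrp K ∧
      ⇑g '' {x : K × K × K | x.2.2 = c} = {x : K × K × K | x.2.2 = c'} := by
    intro c c'
    have himg : ⇑(alphaPerm (0:K) 0 (c' - c)) '' {x : K × K × K | x.2.2 = c}
        = {x : K × K × K | x.2.2 = c'} := by
      rw [Stmt15Aux.alpha_block]
      have : c + (c' - c) = c' := by ring
      rw [this]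
    refine ⟨alphaPerm 0 0 (c' - c), ⟨Subgroup.subset_closure ⟨_, rfl⟩, himg⟩, ?_⟩
    rintro g' ⟨hg'F, hg'img⟩
    obtain ⟨w, rfl⟩ := hFf g' hg'F
    rw [Stmt15Aux.alpha_block] at hg'img
    have hcw : c + w = c' := by
      have h := Set.ext_iff.mp hg'img ((0:K), (0:K), c + w)
      simpa using h
    have hw : w = c' - c := by rw [← hcw]; ring
    rw [hw]
  -- Part (ii)
  have hii1 : (Sgrp K ε ⊔ Siggrp K) ⊓
      Subgroup.centralizer (Fgrp K : Set (Equiv.Perm (K × K × K)))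
      = Subgroup.closure {betaPerm ε (1 : Kˣ) (-1)} := by
    apply le_antisymm
    · intro g hg
      obtain ⟨hgSS, hgC⟩ := hg
      obtain ⟨k, μ, w, hfs⟩ := hSSfs g hgSS
      have horig : g ((0:K),(0:K),(0:K)) = ((0:K),(0:K),(0:K)) := hSSorig g hgSS
      have hw : w = 0 := by
        have h := hfs (0,0,0)
        rw [horig] at h
        have h3 := congrArg (fun p : K × K × K => p.2.2) h
        simpa [h0pow k] using h3.symm
      subst hw
      have hcomm : ∀ w' : K, (μ:K)^2 * w' ^ 3 ^ k = w' := by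
        intro w'
        have hmem : alphaPerm 0 0 w' ∈ (Fgrp K : Set (Equiv.Perm (K × K × K))) :=
          Subgroup.subset_closure ⟨w', rfl⟩
        have heq := Subgroup.mem_centralizer_iff.mp hgC _ hmem
        have hpt := Equiv.ext_iff.mp heq ((0:K), (0:K), (0:K))
        rw [Equiv.Perm.mul_apply, Equiv.Perm.mul_apply, horig] at hpt
        simp only [Stmt15Aux.alphaPerm_apply, add_zero, zero_add] at hpt
        rw [hfs] at hpt
        have h3 := congrArg (fun p : K × K × K => p.2.2) hpt
        simpa using h3.symm
      obtain ⟨hμ, hid⟩ := hforce k μ hcomm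
      rcases hcases g k μ hfs hμ hid with h | h
      · rw [h]; exact one_mem _
      · rw [h]; exact Subgroup.subset_closure rfl
    · refine (Subgroup.closure_le _).mpr ?_
      intro g hg
      rw [Set.mem_singleton_iff] at hg
      subst hg
      exact ⟨(le_sup_left : Sgrp K ε ≤ _) hβS, hβcen⟩
  have hii2 : Fgrp K ⊓ (Sgrp K ε ⊔ Siggrp K) = ⊥ := by
    rw [eq_bot_iff]
    rintro g ⟨hgF, hgSS⟩
    obtain ⟨w, rfl⟩ := hFf g hgF
    have horig : alphaPerm (0:K) 0 w ((0:K),(0:K),(0:K)) = ((0:K),(0:K),(0:K)) :=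
      hSSorig _ hgSS
    have hw : w = 0 := by
      have h3 := congrArg (fun p : K × K × K => p.2.2) horig
      simpa using h3
    rw [hw, Stmt15Aux.alpha_zero_eq_one]
    exact one_mem ⊥
  -- Part (iii)
  have hiii : ∀ g ∈ Fgrp K ⊔ Sgrp K ε ⊔ Siggrp K,
      ((∀ c : K, ⇑g '' {x : K × K × K | x.2.2 = c} = {x : K × K × K | x.2.2 = c})
        ↔ g ∈ Subgroup.closure {betaPerm ε (1 : Kˣ) (-1)}) := by
    intro g hg
    constructor
    · intro hbl
      obtain ⟨k, μ, w, hfs⟩ := hFSSfs g hg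
      have hthird : ∀ c : K, (μ:K)^2 * c ^ 3 ^ k + w = c := by
        intro c
        have hx : ((0:K),(0:K),c) ∈ {x : K × K × K | x.2.2 = c} := rfl
        have hmem : g (0,0,c) ∈ {x : K × K × K | x.2.2 = c} := by
          rw [← hbl c]
          exact Set.mem_image_of_mem _ hx
        rw [hfs] at hmem
        simpa using hmem
      have hw : w = 0 := by
        have h := hthird 0
        rwa [h0pow k, mul_zero, zero_add] at h
      subst hw
      obtain ⟨hμ, hid⟩ := hforce k μ (fun c => by
        have h := hthird c; rwa [add_zero] at h)
      rcases hcases g k μ hfs hμ hid with h | h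
      · rw [h]; exact one_mem _
      · rw [h]; exact Subgroup.subset_closure rfl
    · intro hmem c
      exact Stmt15Aux.stabS_block (fun x => hclosβstab g hmem x) c
  -- Part (iv): normalization
  have hnormgen : ∀ g₀ ∈ (({g : Equiv.Perm (K×K×K) | ∃ w : K, g = alphaPerm 0 0 w} ∪
        {g | ∃ μ : Kˣ, g = betaPerm ε (μ^2) μ}) ∪ {sigmaPerm K}),
      (∀ n ∈ K1grp K ε, g₀ * n * g₀⁻¹ ∈ K1grp K ε) ∧
        (∀ n ∈ K2grp K ε, g₀ * n * g₀⁻¹ ∈ K2grp K ε) := by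
    rintro g₀ ((⟨w, rfl⟩ | ⟨μ, rfl⟩) | rfl)
    · constructor
      · refine Stmt15Aux.conj_red _ _ _ hK1eq ?_
        rintro a (⟨u, v, rfl⟩ | ((⟨e, rfl⟩ | rfl) | ⟨ν, rfl⟩))
        · rw [Stmt15Aux.cfa]; exact memV1 u v
        · rw [Stmt15Aux.cfg]; exact memC1 e
        · rw [Stmt15Aux.cfd]; exact memD1
        · rw [Stmt15Aux.cfb]; exact memT1 ν
      · refine Stmt15Aux.conj_red _ _ _ hK2eq ?_
        rintro a (((⟨u, v, rfl⟩ | ⟨e, rfl⟩) | ⟨d, rfl⟩) | ⟨ν, rfl⟩)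
        · rw [Stmt15Aux.cfa]; exact memV2 u v
        · rw [Stmt15Aux.cfg]; exact memC2 e
        · rw [Stmt15Aux.cft]; exact mul_mem (memV2 _ 0) (memE2 d)
        · rw [Stmt15Aux.cfb]; exact memT2 ν
    · constructor
      · refine Stmt15Aux.conj_red _ _ _ hK1eq ?_
        rintro a (⟨u, v, rfl⟩ | ((⟨e, rfl⟩ | rfl) | ⟨ν, rfl⟩))
        · rw [Stmt15Aux.cba ε hk2]; exact memV1 _ _
        · rw [Stmt15Aux.cbg ε hk2]; exact memC1 _
        · rw [Stmt15Aux.cbd ε hk2]; exact mul_mem (memT1 μ) memD1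
        · rw [Stmt15Aux.cbb ε hk2]; exact memT1 ν
      · refine Stmt15Aux.conj_red _ _ _ hK2eq ?_
        rintro a (((⟨u, v, rfl⟩ | ⟨e, rfl⟩) | ⟨d, rfl⟩) | ⟨ν, rfl⟩)
        · rw [Stmt15Aux.cba ε hk2]; exact memV2 _ _
        · rw [Stmt15Aux.cbg ε hk2]; exact memC2 _
        · rw [Stmt15Aux.cbt ε hk2]; exact memE2 d
        · rw [Stmt15Aux.cbb ε hk2]; exact memT2 ν
    · constructor
      · refine Stmt15Aux.conj_red _ _ _ hK1eq ?_
        rintro a (⟨u, v, rfl⟩ | ((⟨e, rfl⟩ | rfl) | ⟨ν, rfl⟩))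
        · rw [Stmt15Aux.csa]; exact memV1 _ _
        · rw [Stmt15Aux.csg]; exact memC1 _
        · rw [Stmt15Aux.csd]; exact memD1
        · rw [Stmt15Aux.csb]; exact memT1 (ν ^ 3)
      · refine Stmt15Aux.conj_red _ _ _ hK2eq ?_
        rintro a (((⟨u, v, rfl⟩ | ⟨e, rfl⟩) | ⟨d, rfl⟩) | ⟨ν, rfl⟩)
        · rw [Stmt15Aux.csa]; exact memV2 _ _
        · rw [Stmt15Aux.csg]; exact memC2 _
        · rw [Stmt15Aux.cst]; exact memE2 _
        · rw [Stmt15Aux.csb]; exact memT2 (ν ^ 3)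
  have hN1 : ∀ g ∈ Fgrp K ⊔ Sgrp K ε ⊔ Siggrp K, ∀ n,
      n ∈ K1grp K ε ↔ g * n * g⁻¹ ∈ K1grp K ε := by
    intro g hg
    rw [hFSSeq] at hg
    exact fun n => ((Subgroup.closure_le _).mpr (fun g₀ hg₀ =>
      Subgroup.mem_normalizer_fintype fun n' hn' => (hnormgen g₀ hg₀).1 n' hn') hg) n
  have hN2 : ∀ g ∈ Fgrp K ⊔ Sgrp K ε ⊔ Siggrp K, ∀ n,
      n ∈ K2grp K ε ↔ g * n * g⁻¹ ∈ K2grp K ε := by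
    intro g hg
    rw [hFSSeq] at hg
    exact fun n => ((Subgroup.closure_le _).mpr (fun g₀ hg₀ =>
      Subgroup.mem_normalizer_fintype fun n' hn' => (hnormgen g₀ hg₀).2 n' hn') hg) n
  -- Part (iv): intersections
  have hiv1 : K1grp K ε ⊓ (Fgrp K ⊔ Sgrp K ε ⊔ Siggrp K) = ⊥ := by
    rw [eq_bot_iff]
    rintro g ⟨hg1, hgF⟩
    obtain ⟨k, μ, w, hfs⟩ := hFSSfs g hgF
    obtain ⟨p, q, rr, s, t1, t2, hdet, hf⟩ := hK1h1 g hg1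
    have hthird : ∀ c : K, (μ:K)^2 * c ^ 3 ^ k + w = c := by
      intro c
      have h := (hf ((0:K),(0:K),c)).symm.trans (hfs ((0:K),(0:K),c))
      have h3 := congrArg (fun p : K × K × K => p.2.2) h
      simpa using h3.symm
    have hw : w = 0 := by
      have h := hthird 0
      rwa [h0pow k, mul_zero, zero_add] at h
    subst hw
    obtain ⟨hμ, hid⟩ := hforce k μ (fun c => by
      have h := hthird c; rwa [add_zero] at h)
    have hE : ∀ a b : K, (p * a + q * b + t1 = a) ∧ (rr * a + s * b + t2 = (μ:K) * b) := by
      intro a b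
      have h := (hf (a, b, 0)).symm.trans (hfs (a, b, 0))
      rw [Prod.mk.injEq, Prod.mk.injEq] at h
      obtain ⟨e1, e2, _⟩ := h
      rw [hid, hμ, one_mul] at e1
      rw [hid] at e2
      exact ⟨e1, e2⟩
    have ht1 : t1 = 0 := by simpa using (hE 0 0).1
    have ht2 : t2 = 0 := by simpa using (hE 0 0).2
    have hp : p = 1 := by have h := (hE 1 0).1; rw [ht1] at h; simpa using h
    have hq : q = 0 := by have h := (hE 0 1).1; rw [ht1, hp] at h; simpa using h
    have hrr : rr = 0 := by have h := (hE 1 0).2; rw [ht2] at h; simpa using h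
    have hs : s = (μ:K) := by have h := (hE 0 1).2; rw [ht2] at h; simpa using h
    have hμ1 : (μ:K) = 1 := by
      have h := hdet
      rw [hp, hq, hrr, hs] at h
      simpa using h
    have hg_one : g = 1 := by
      refine Equiv.ext fun x => ?_
      rw [hf x, hp, hq, hrr, hs, ht1, ht2, hμ1]
      simp
    rw [hg_one]
    exact one_mem ⊥
  have hiv2 : K2grp K ε ⊓ (Fgrp K ⊔ Sgrp K ε ⊔ Siggrp K) = ⊥ := by
    rw [eq_bot_iff]
    rintro g ⟨hg2, hgF⟩
    obtain ⟨k, μ, w, hfs⟩ := hFSSfs g hgF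
    obtain ⟨m, t, P, hf⟩ := hK2h2 g hg2
    have hthird : ∀ c : K, (μ:K)^2 * c ^ 3 ^ k + w = c := by
      intro c
      have h := (hf ((0:K),(0:K),c)).symm.trans (hfs ((0:K),(0:K),c))
      have h3 := congrArg (fun p : K × K × K => p.2.2) h
      simpa using h3.symm
    have hw : w = 0 := by
      have h := hthird 0
      rwa [h0pow k, mul_zero, zero_add] at h
    subst hw
    obtain ⟨hμ, hid⟩ := hforce k μ (fun c => by
      have h := hthird c; rwa [add_zero] at h)
    have hE : ∀ a b c : K, ((m:K) * a + P b c = a) ∧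
        (((m⁻¹ : Kˣ) : K) * b + t = (μ:K) * b) := by
      intro a b c
      have h := (hf (a, b, c)).symm.trans (hfs (a, b, c))
      rw [Prod.mk.injEq, Prod.mk.injEq] at h
      obtain ⟨e1, e2, _⟩ := h
      rw [hid, hμ, one_mul] at e1
      rw [hid] at e2
      exact ⟨e1, e2⟩
    have ht : t = 0 := by simpa using (hE 0 0 0).2
    have hP : ∀ b c : K, P b c = 0 := by
      intro b c
      simpa using (hE 0 b c).1
    have hm : (m:K) = 1 := by
      have h := (hE 1 0 0).1
      rw [hP 0 0] at h
      simpa using h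
    have hm1 : m = 1 := Units.ext (by simpa using hm)
    have hμ1 : (μ:K) = 1 := by
      have h := (hE 0 1 0).2
      rw [ht, hm1] at h
      simpa using h.symm
    have hg_one : g = 1 := by
      refine Equiv.ext fun x => ?_
      rw [hf x, hm1, ht]
      simp [hP]
    rw [hg_one]
    exact one_mem ⊥
  exact ⟨⟨hpart1a, hpart1b⟩, ⟨hii1, hii2⟩, hiii,
    ⟨fun g hg => ⟨fun kk hk => (hN1 g hg kk).mp hk, fun kk hk => (hN2 g hg kk).mp hk⟩,
      hiv1, hiv2⟩⟩
end

section
/- The permutation β_{1,−1} of Ω (which maps (a,b,c) to (a, −b, c)) is an even permutation if and only if q ≡ 1 (mod 4). -/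
open Equiv

private lemma sign_neg_field (K : Type*) [Field K] [Fintype K] [DecidableEq K]
    (h2 : (2 : K) ≠ 0) :
    Equiv.Perm.sign (Equiv.neg K : Equiv.Perm K) =
      (-1 : ℤˣ) ^ ((Fintype.card K - 1) / 2) := by
  set σ : Equiv.Perm K := Equiv.neg K
  have hσ2 : σ ^ 2 = 1 := by ext x; simp [σ, sq]
  have hσne : σ ≠ 1 := by
    intro h
    have := congrArg (fun f => f 1) h
    simp [σ] at this
    exact h2 (by linear_combination -this)
  have horder : orderOf σ = 2 := orderOf_eq_prime hσ2 hσne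
  have hmem : ∀ n ∈ σ.cycleType, n = 2 := by
    intro n hn
    have h1 : n ∣ 2 := horder ▸ σ.lcm_cycleType ▸ Multiset.dvd_lcm hn
    have h2 := Equiv.Perm.two_le_of_mem_cycleType hn
    have := Nat.le_of_dvd (by norm_num) h1
    omega
  have hrep : σ.cycleType = Multiset.replicate (Multiset.card σ.cycleType) 2 :=
    Multiset.eq_replicate_card.2 hmem
  have hsupp : σ.support = {(0 : K)}ᶜ := by
    ext x
    simp only [Equiv.Perm.mem_support, Finset.mem_compl, Finset.mem_singleton]
    constructor
    · intro h h0; apply h; simp [σ, h0]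
    · intro h hx; apply h
      have : (2 : K) * x = 0 := by
        have : -x = x := hx
        linear_combination -this
      exact (mul_eq_zero.1 this).resolve_left h2
  have hsum : σ.cycleType.sum = Fintype.card K - 1 := by
    rw [Equiv.Perm.sum_cycleType, hsupp, Finset.card_compl]
    simp
  have hcard2 : 2 * Multiset.card σ.cycleType = Fintype.card K - 1 := by
    rw [← hsum, hrep]; simp [Multiset.sum_replicate]; ring
  have hc : Multiset.card σ.cycleType = (Fintype.card K - 1) / 2 := by omega
  rw [Equiv.Perm.sign_of_cycleType, hsum, ← hc]
  rw [← hcard2, pow_add, pow_mul]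
  simp

private lemma neg_one_pow_iff_mod_four (n : ℕ) (hn : Odd n) :
    ((-1 : ℤˣ) ^ ((n - 1) / 2) = 1 ↔ n % 4 = 1) := by
  obtain ⟨k, hk⟩ := hn
  rcases Nat.even_or_odd k with ⟨m, hm⟩ | ⟨m, hm⟩
  · have h1 : (n - 1) / 2 = 2 * m := by omega
    have h2 : n % 4 = 1 := by omega
    simp [h1, h2, pow_mul]
  · have h1 : (n - 1) / 2 = 2 * m + 1 := by omega
    have h2 : n % 4 = 3 := by omega
    rw [h1, h2, pow_succ, pow_mul]
    simp

private lemma beta_decomp (K : Type*) [Field K] (ε : ℕ) :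
    betaPerm ε (1 : Kˣ) (-1) =
      Equiv.prodCongrRight (fun _ : K =>
        Equiv.prodCongrLeft (fun _ : K => (Equiv.neg K : Equiv.Perm K))) := by
  have h : ((1 : Kˣ) * (-1)) ^ (2 * ε) = 1 := by
    rw [one_mul, pow_mul]; norm_num
  ext x <;>
    simp [betaPerm, Equiv.prodCongrRight, Equiv.prodCongrLeft, h, Equiv.prodCongr]

/-- From the proof of Lemma 4.4: the permutation `β_{1,-1} : (a,b,c) ↦ (a, -b, c)` of `Ω`
is even if and only if `q ≡ 1 (mod 4)`. -/
theorem stmt18 (r : ℕ) (hr : 1 ≤ r) (K : Type*) [Field K] [Fintype K] [DecidableEq K]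
    (hcard : Fintype.card K = 3 ^ r) (ε : ℕ) (hε : ε = 3 ^ (r - 1)) :
    Equiv.Perm.sign (betaPerm ε (1 : Kˣ) (-1)) = 1 ↔ 3 ^ r % 4 = 1 := by
  classical
  have hodd : Odd (3 ^ r) := Odd.pow ⟨1, by norm_num⟩
  have h2 : (2 : K) ≠ 0 := by
    intro h
    have hchar : ringChar K = 2 := by
      have hp : (ringChar K).Prime := CharP.char_is_prime K (ringChar K)
      have hdvd : ringChar K ∣ 2 := by
        apply (ringChar.spec K 2).mp
        rw [Nat.cast_ofNat]; exact h
      exact (Nat.prime_dvd_prime_iff_eq hp Nat.prime_two).mp hdvd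
    have : Fintype.card K % 2 = 0 := FiniteField.even_card_iff_char_two.mp hchar
    rw [hcard] at this
    obtain ⟨k, hk⟩ := hodd
    omega
  rw [beta_decomp, Equiv.Perm.sign_prodCongrRight]
  simp only [Equiv.Perm.sign_prodCongrLeft]
  rw [Finset.prod_const, Finset.prod_const, ← pow_mul,
    sign_neg_field K h2, hcard, ← pow_mul]
  have hkey : ((-1 : ℤˣ)) ^ ((3 ^ r - 1) / 2 * (Fintype.card K * Fintype.card K)) =
      (-1 : ℤˣ) ^ ((3 ^ r - 1) / 2) := by
    rw [pow_mul]
    rcases Int.units_eq_one_or ((-1 : ℤˣ) ^ ((3 ^ r - 1) / 2)) with hu | hu <;> rw [hu]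
    · rw [one_pow]
    · exact Odd.neg_one_pow (by rw [hcard]; exact hodd.mul hodd)
  rw [Finset.card_univ, hkey]
  exact neg_one_pow_iff_mod_four _ hodd
end
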